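/- arXiv:1401.5379 — 9 statements merged into one kernel-verified Lean document; each statement's English description precedes it below -/
import Mathlib

section
/- For integers i ≥ 1 and j ≥ 1, the number of pairs (α, β) of polynomials over 𝔽_q with deg α = i, deg β = j, and α and β coprime equals (q−1)³·q^{i+j−1}. Equivalently, the probability that two uniformly random polynomials in 𝔽_q[t] of degrees exactly i and j are coprime is 1 − 1/q. -/
open Polynomial

section Helpers

lemma wb_eq_iff (d : WithBot ℕ) (n : ℕ) :
    d = (n : WithBot ℕ) ↔ d < ((n+1 : ℕ) : WithBot ℕ) ∧ ¬ d < (n : WithBot ℕ) := by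
  cases d with
  | bot => simp [Nat.cast_withBot]
  | coe m =>
    simp only [Nat.cast_withBot, WithBot.coe_lt_coe, WithBot.coe_eq_coe]
    omega

lemma wb_lt_succ_iff (d : WithBot ℕ) (n : ℕ) :
    d < ((n+1 : ℕ) : WithBot ℕ) ↔ d < (n : WithBot ℕ) ∨ d = (n : WithBot ℕ) := by
  cases d with
  | bot =>
    simp only [Nat.cast_withBot]
    constructor
    · intro _; exact Or.inl (by exact_mod_cast WithBot.bot_lt_coe n)
    · intro _; exact_mod_cast WithBot.bot_lt_coe (n + 1)
  | coe m =>
    simp only [Nat.cast_withBot, WithBot.coe_lt_coe, WithBot.coe_eq_coe]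
    omega

/-- An equiv splitting a subtype of a disjunction of disjoint predicates. -/
noncomputable def subtypeOr {α : Type*} (P Q : α → Prop) (h : ∀ x, P x → Q x → False) :
    {x // P x ∨ Q x} ≃ {x // P x} ⊕ {x // Q x} := by
  classical
  exact
  { toFun := fun x => if hp : P x.1 then Sum.inl ⟨x.1, hp⟩ else
      Sum.inr ⟨x.1, x.2.resolve_left hp⟩
    invFun := fun y => y.elim (fun a => ⟨a.1, Or.inl a.2⟩) (fun a => ⟨a.1, Or.inr a.2⟩)
    left_inv := fun x => by by_cases hp : P x.1 <;> simp [hp]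
    right_inv := fun y => by
      cases y with
      | inl a => simp [a.2]
      | inr a =>
        have hnp : ¬ P a.1 := fun hp => h a.1 hp a.2
        simp only [Sum.elim_inr]
        exact dif_neg hnp }

lemma isCoprime_of_isUnit_right {R : Type*} [CommRing R] {a b : R} (hb : IsUnit b) :
    IsCoprime a b := by
  obtain ⟨u, rfl⟩ := hb
  exact ⟨0, ↑u⁻¹, by simp⟩

end Helpers

section Counting

variable {F : Type} [Field F] [Fintype F]

lemma card_degreeLT (n : ℕ) :
    Nat.card {p : F[X] // p.degree < (n : ℕ)} = Fintype.card F ^ n := by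
  have e1 : {p : F[X] // p.degree < (n : ℕ)} ≃ degreeLT F n :=
    Equiv.subtypeEquivRight (fun p => (Polynomial.mem_degreeLT).symm)
  rw [Nat.card_congr (e1.trans (Polynomial.degreeLTEquiv F n).toEquiv),
    Nat.card_eq_fintype_card]
  simp

lemma finite_degreeLT (n : ℕ) : Finite {p : F[X] // p.degree < (n : ℕ)} :=
  Finite.of_equiv _ ((Equiv.subtypeEquivRight
    (fun p => (Polynomial.mem_degreeLT (n := n)).symm)).trans
    (Polynomial.degreeLTEquiv F n).toEquiv).symm

lemma finite_degreeEq (n : ℕ) : Finite {p : F[X] // p.degree = (n : ℕ)} := by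
  have := finite_degreeLT (F := F) (n + 1)
  exact Finite.of_injective
    (fun x => (⟨x.1, ((wb_eq_iff _ _).mp x.2).1⟩ :
      {p : F[X] // p.degree < ((n+1 : ℕ) : WithBot ℕ)}))
    (fun a b h => Subtype.ext (by simpa using congrArg Subtype.val h))

lemma card_degreeEq (n : ℕ) :
    Nat.card {p : F[X] // p.degree = (n : ℕ)} = (Fintype.card F - 1) * Fintype.card F ^ n := by
  have hset : {p : F[X] | p.degree = (n : ℕ)}
      = {p : F[X] | p.degree < ((n+1 : ℕ) : WithBot ℕ)} \ {p : F[X] | p.degree < (n : ℕ)} := by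
    ext p; simpa using wb_eq_iff p.degree n
  have hsub : {p : F[X] | p.degree < (n : ℕ)}
      ⊆ {p : F[X] | p.degree < ((n+1 : ℕ) : WithBot ℕ)} := by
    intro p hp
    simp only [Set.mem_setOf_eq] at *
    exact lt_trans hp (by exact_mod_cast Nat.lt_succ_self n)
  have hN : Nat.card {p : F[X] // p.degree = (n : ℕ)}
      = Set.ncard {p : F[X] | p.degree = (n : ℕ)} := rfl
  rw [hN, hset, Set.ncard_diff hsub (Set.finite_coe_iff.mp (finite_degreeLT n))]
  have h1 : Set.ncard {p : F[X] | p.degree < ((n+1 : ℕ) : WithBot ℕ)}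
      = Fintype.card F ^ (n+1) := card_degreeLT (n+1)
  have h2 : Set.ncard {p : F[X] | p.degree < (n : ℕ)} = Fintype.card F ^ n :=
    card_degreeLT n
  rw [h1, h2, Nat.sub_mul, one_mul, pow_succ, mul_comm (Fintype.card F ^ n)]

end Counting

section Euclid

variable {F : Type} [Field F]

lemma deg_ne_zero {a : F[X]} {i : ℕ} (h1 : a.degree = (i : ℕ)) : a ≠ 0 := by
  intro h
  rw [h, degree_zero] at h1
  exact absurd h1 (by simp [Nat.cast_withBot])

lemma div_deg {a b : F[X]} {i j : ℕ} (hij : i ≤ j)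
    (h1 : a.degree = (i : ℕ)) (h2 : b.degree = (j : ℕ)) :
    (b / a).degree = ((j - i : ℕ) : WithBot ℕ) := by
  have ha : a ≠ 0 := deg_ne_zero h1
  have hle : a.degree ≤ b.degree := by rw [h1, h2]; exact_mod_cast hij
  have key : ((i : ℕ) : WithBot ℕ) + (b / a).degree = ((j : ℕ) : WithBot ℕ) := by
    rw [← h1, ← h2]; exact degree_add_div ha hle
  cases hd : (b / a).degree with
  | bot => rw [hd] at key; simp [Nat.cast_withBot] at key
  | coe m =>
    rw [hd] at key
    have hk : i + m = j := by
      rw [Nat.cast_withBot, Nat.cast_withBot] at key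
      exact_mod_cast key
    simp only [Nat.cast_withBot, WithBot.coe_eq_coe]
    omega

lemma mod_deg {a : F[X]} (b : F[X]) {i : ℕ} (h1 : a.degree = (i : ℕ)) :
    (b % a).degree < (i : ℕ) := h1 ▸ EuclideanDomain.mod_lt b (deg_ne_zero h1)

lemma cop_mod {a b : F[X]} (h : IsCoprime a b) : IsCoprime a (b % a) := by
  have hb : b % a = b + a * (-(b / a)) := by
    linear_combination EuclideanDomain.div_add_mod b a
  rw [hb]
  exact h.add_mul_left_right _

lemma add_deg {a s r : F[X]} {i j : ℕ} (hij : i ≤ j) (h1 : a.degree = (i : ℕ))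
    (hs : s.degree = ((j - i : ℕ) : WithBot ℕ)) (h2 : r.degree < (i : ℕ)) :
    (a * s + r).degree = (j : ℕ) := by
  have hmul : (a * s).degree = (j : ℕ) := by
    rw [degree_mul, h1, hs, Nat.cast_withBot, Nat.cast_withBot, Nat.cast_withBot,
      ← WithBot.coe_add, WithBot.coe_eq_coe]
    omega
  rw [degree_add_eq_left_of_degree_lt, hmul]
  rw [hmul]
  exact lt_of_lt_of_le h2 (by exact_mod_cast hij)

lemma cop_add {a s r : F[X]} (h : IsCoprime a r) : IsCoprime a (a * s + r) :=
  (add_comm r (a * s)) ▸ h.add_mul_left_right s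

lemma euclid_unique {a s r : F[X]} (ha : a ≠ 0) (hr : r.degree < a.degree) :
    (a * s + r) / a = s ∧ (a * s + r) % a = r := by
  have key : a * (s - (a * s + r) / a) = (a * s + r) % a - r := by
    linear_combination - EuclideanDomain.div_add_mod (a * s + r) a
  by_cases hsq : s - (a * s + r) / a = 0
  · have h1 : (a * s + r) / a = s := by
      have := sub_eq_zero.mp hsq; exact this.symm
    refine ⟨h1, ?_⟩
    rw [hsq, mul_zero] at key
    have := (sub_eq_zero.mp key.symm)
    exact this
  · exfalso
    have hge : a.degree ≤ (a * (s - (a * s + r) / a)).degree := by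
      rw [degree_mul]
      exact le_add_of_nonneg_right (zero_le_degree_iff.mpr hsq)
    have hlt : ((a * s + r) % a - r).degree < a.degree :=
      lt_of_le_of_lt (degree_sub_le _ _)
        (max_lt (EuclideanDomain.mod_lt _ ha) hr)
    rw [key] at hge
    exact absurd hlt (not_lt.mpr hge)

end Euclid

section Main

variable (F : Type) [Field F] [Fintype F]

/-- Number of coprime pairs with exact degrees `i`, `j`. -/
noncomputable def Ncop (i j : ℕ) : ℕ := Nat.card {p : F[X] × F[X] //
  p.1.degree = (i : ℕ) ∧ p.2.degree = (j : ℕ) ∧ IsCoprime p.1 p.2}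

/-- Number of coprime pairs with first degree exactly `i`, second degree `< n`. -/
noncomputable def Mcop (i n : ℕ) : ℕ := Nat.card {p : F[X] × F[X] //
  p.1.degree = (i : ℕ) ∧ p.2.degree < (n : ℕ) ∧ IsCoprime p.1 p.2}

variable {F}

lemma finite_pair_subtype {P Q : F[X] → Prop} (C : F[X] × F[X] → Prop)
    (hP : Finite {a : F[X] // P a}) (hQ : Finite {b : F[X] // Q b}) :
    Finite {p : F[X] × F[X] // P p.1 ∧ Q p.2 ∧ C p} := by
  apply Finite.of_injective
    (f := fun x => ((⟨x.1.1, x.2.1⟩ : {a // P a}), (⟨x.1.2, x.2.2.1⟩ : {b // Q b})))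
  intro x y hxy
  rw [Prod.ext_iff] at hxy
  exact Subtype.ext (Prod.ext (congrArg Subtype.val hxy.1) (congrArg Subtype.val hxy.2))

lemma finite_pairs_eq (i j : ℕ) : Finite {p : F[X] × F[X] //
    p.1.degree = (i : ℕ) ∧ p.2.degree = (j : ℕ) ∧ IsCoprime p.1 p.2} :=
  finite_pair_subtype _ (finite_degreeEq i) (finite_degreeEq j)

lemma finite_pairs_lt (i n : ℕ) : Finite {p : F[X] × F[X] //
    p.1.degree = (i : ℕ) ∧ p.2.degree < (n : ℕ) ∧ IsCoprime p.1 p.2} :=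
  finite_pair_subtype _ (finite_degreeEq i) (finite_degreeLT n)

lemma Ncop_comm (i j : ℕ) : Ncop F i j = Ncop F j i :=
  Nat.card_congr ⟨fun x => ⟨(x.1.2, x.1.1), x.2.2.1, x.2.1, x.2.2.2.symm⟩,
    fun x => ⟨(x.1.2, x.1.1), x.2.2.1, x.2.1, x.2.2.2.symm⟩,
    fun x => rfl, fun x => rfl⟩

/-- Euclid-step factorization. -/
lemma Ncop_eq_mul (i j : ℕ) (hij : i ≤ j) :
    Ncop F i j = Nat.card {s : F[X] // s.degree = ((j - i : ℕ) : WithBot ℕ)} * Mcop F i i := by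
  rw [Ncop, Mcop, ← Nat.card_prod]
  apply Nat.card_congr
  exact
  { toFun := fun x =>
      (⟨x.1.2 / x.1.1, div_deg hij x.2.1 x.2.2.1⟩,
       ⟨(x.1.1, x.1.2 % x.1.1), x.2.1, mod_deg x.1.2 x.2.1, cop_mod x.2.2.2⟩)
    invFun := fun y =>
      ⟨(y.2.1.1, y.2.1.1 * y.1.1 + y.2.1.2), y.2.2.1,
        add_deg hij y.2.2.1 y.1.2 y.2.2.2.1, cop_add y.2.2.2.2⟩
    left_inv := fun x => Subtype.ext (Prod.ext rfl (EuclideanDomain.div_add_mod _ _))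
    right_inv := fun y => by
      have ha : y.2.1.1 ≠ 0 := deg_ne_zero y.2.2.1
      have hr : y.2.1.2.degree < y.2.1.1.degree := by
        rw [y.2.2.1]; exact y.2.2.2.1
      obtain ⟨hdiv, hmod⟩ := euclid_unique (s := y.1.1) ha hr
      exact Prod.ext (Subtype.ext hdiv) (Subtype.ext (Prod.ext rfl hmod)) }

lemma Mcop_zero (i : ℕ) (hi : 1 ≤ i) : Mcop F i 0 = 0 := by
  have : IsEmpty {p : F[X] × F[X] //
      p.1.degree = (i : ℕ) ∧ p.2.degree < ((0 : ℕ) : WithBot ℕ) ∧ IsCoprime p.1 p.2} := by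
    refine ⟨fun x => ?_⟩
    obtain ⟨⟨a, b⟩, h1, h2, h3⟩ := x
    have hb : b = 0 := by
      rw [← degree_eq_bot]
      exact Nat.WithBot.lt_zero_iff.mp (by exact_mod_cast h2)
    rw [hb] at h3
    have := isUnit_iff_degree_eq_zero.mp (isCoprime_zero_right.mp h3)
    rw [h1] at this
    have hi0 : i = 0 := by exact_mod_cast this
    omega
  rw [Mcop]
  exact Nat.card_of_isEmpty

lemma Mcop_succ (i n : ℕ) : Mcop F i (n + 1) = Mcop F i n + Ncop F i n := by
  haveI := finite_pairs_lt (F := F) i n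
  haveI := finite_pairs_eq (F := F) i n
  rw [Mcop, Mcop, Ncop, ← Nat.card_sum]
  apply Nat.card_congr
  refine (Equiv.subtypeEquivRight (q := fun p : F[X] × F[X] =>
      (p.1.degree = (i : ℕ) ∧ p.2.degree < (n : ℕ) ∧ IsCoprime p.1 p.2) ∨
      (p.1.degree = (i : ℕ) ∧ p.2.degree = (n : ℕ) ∧ IsCoprime p.1 p.2)) ?_).trans
    (subtypeOr _ _ ?_)
  · intro p
    constructor
    · rintro ⟨h1, h2, h3⟩
      rcases (wb_lt_succ_iff p.2.degree n).mp (by exact_mod_cast h2) with h | h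
      · exact Or.inl ⟨h1, h, h3⟩
      · exact Or.inr ⟨h1, h, h3⟩
    · rintro (⟨h1, h2, h3⟩ | ⟨h1, h2, h3⟩)
      · exact ⟨h1, by exact_mod_cast (wb_lt_succ_iff p.2.degree n).mpr (Or.inl h2), h3⟩
      · exact ⟨h1, by exact_mod_cast (wb_lt_succ_iff p.2.degree n).mpr (Or.inr h2), h3⟩
  · rintro p ⟨_, h2, _⟩ ⟨_, h2', _⟩
    rw [h2'] at h2
    exact lt_irrefl _ h2

lemma Ncop_zero_right (i : ℕ) :
    Ncop F i 0 = ((Fintype.card F - 1) * Fintype.card F ^ i) * (Fintype.card F - 1) := by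
  have e : {p : F[X] × F[X] //
      p.1.degree = (i : ℕ) ∧ p.2.degree = ((0 : ℕ) : WithBot ℕ) ∧ IsCoprime p.1 p.2}
      ≃ {a : F[X] // a.degree = (i : ℕ)} × {b : F[X] // b.degree = ((0 : ℕ) : WithBot ℕ)} :=
  { toFun := fun x => (⟨x.1.1, x.2.1⟩, ⟨x.1.2, x.2.2.1⟩)
    invFun := fun y => ⟨(y.1.1, y.2.1), y.1.2, y.2.2,
      isCoprime_of_isUnit_right (isUnit_iff_degree_eq_zero.mpr (by exact_mod_cast y.2.2))⟩
    left_inv := fun x => rfl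
    right_inv := fun y => rfl }
  rw [Ncop, Nat.card_congr e, Nat.card_prod, card_degreeEq, card_degreeEq]
  simp [mul_comm]

end Main

section Final

variable {F : Type} [Field F] [Fintype F]

lemma Ncop_formula : ∀ m i j : ℕ, 1 ≤ i → i ≤ j → i ≤ m →
    Ncop F i j = (Fintype.card F - 1) ^ 3 * Fintype.card F ^ (i + j - 1) := by
  intro m
  induction m using Nat.strong_induction_on with
  | _ m IH =>
    intro i j hi hij him
    have hq1 : 1 ≤ Fintype.card F := Fintype.card_pos
    have hM : ∀ n, 1 ≤ n → n ≤ i →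
        Mcop F i n = (Fintype.card F - 1) ^ 2 * Fintype.card F ^ (i + n - 1) := by
      intro n
      induction n with
      | zero => intro h _; omega
      | succ n IHn =>
        intro _ hni
        rcases Nat.eq_zero_or_pos n with rfl | hn
        · rw [Mcop_succ, Mcop_zero i hi, Ncop_zero_right, zero_add]
          rw [show i + 1 - 1 = i by omega]
          ring
        · have hrec := IHn (by omega) (by omega)
          have hNin : Ncop F i n = (Fintype.card F - 1) ^ 3 * Fintype.card F ^ (i + n - 1) := by
            rw [Ncop_comm i n, IH n (by omega) n i hn (by omega) le_rfl,
              show n + i - 1 = i + n - 1 by omega]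
          rw [Mcop_succ, hrec, hNin,
            show i + (n + 1) - 1 = (i + n - 1) + 1 by omega, pow_succ]
          have hA : 1 + (Fintype.card F - 1) = Fintype.card F := by omega
          calc (Fintype.card F - 1) ^ 2 * Fintype.card F ^ (i + n - 1)
                + (Fintype.card F - 1) ^ 3 * Fintype.card F ^ (i + n - 1)
              = (Fintype.card F - 1) ^ 2
                * (Fintype.card F ^ (i + n - 1) * (1 + (Fintype.card F - 1))) := by ring
            _ = (Fintype.card F - 1) ^ 2
                * (Fintype.card F ^ (i + n - 1) * Fintype.card F) := by rw [hA]
    have hMi := hM i hi le_rfl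
    rw [Ncop_eq_mul i j hij, card_degreeEq, hMi,
      show i + j - 1 = (j - i) + (i + i - 1) by omega, pow_add]
    ring

end Final


/-- For integers `i ≥ 1` and `j ≥ 1`, the number of pairs `(α, β)` of polynomials over `𝔽_q`
with `deg α = i`, `deg β = j`, and `α`, `β` coprime equals `(q−1)³ · q^(i+j−1)`. -/
theorem coprime_pairs_count_exact_degrees
    (F : Type) [Field F] [Fintype F] (q : ℕ) (hq : Fintype.card F = q)
    (i j : ℕ) (hi : 1 ≤ i) (hj : 1 ≤ j) :
    Nat.card {p : F[X] × F[X] //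
      p.1.degree = (i : ℕ) ∧ p.2.degree = (j : ℕ) ∧ IsCoprime p.1 p.2} =
      (q - 1) ^ 3 * q ^ (i + j - 1) := by
  subst hq
  show Ncop F i j = _
  rcases le_total i j with h | h
  · exact Ncop_formula i i j hi h le_rfl
  · rw [Ncop_comm i j, Ncop_formula j j i hj h le_rfl,
      show j + i - 1 = i + j - 1 by omega]
end

section
/- Let n ≤ m be natural numbers with m + n > d. Suppose α, β, γ, δ ∈ 𝔽_q[t] satisfy 2·deg α ≤ d+n−m, 2·deg β ≤ d+n+m, 2·deg γ ≤ d−n−m, 2·deg δ ≤ d−n+m (the zero polynomial satisfying every degree bound), and αδ − βγ = λf for some λ ∈ 𝔽_q^×. Then necessarily m − n = d, γ = 0, α is a nonzero constant, and δ = μf for some μ ∈ 𝔽_q^×. In particular no such quadruple exists when m + n > d and m − n ≠ d. -/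
open Polynomial

/-- Case `m + n > d`: if `α, β, γ, δ ∈ 𝔽_q[t]` satisfy the degree bounds
`2 deg α ≤ d+n−m`, `2 deg β ≤ d+n+m`, `2 deg γ ≤ d−n−m`, `2 deg δ ≤ d−n+m`
(the zero polynomial satisfying every bound) and `αδ − βγ = λf` for a unit `λ`,
then `m − n = d`, `γ = 0`, `α` is a nonzero constant, and `δ = μf` for a unit `μ`. -/
theorem case_m_add_n_gt_d
    (F : Type) [Field F] [Fintype F]
    (f : F[X]) (hf : Irreducible f) (hmonic : f.Monic)
    (d : ℕ) (hd : f.natDegree = d) (hd1 : 1 ≤ d)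
    (n m : ℕ) (hnm : n ≤ m) (hbig : d < m + n)
    (α β γ δ : F[X])
    (hα : α ≠ 0 → 2 * (α.natDegree : ℤ) ≤ (d : ℤ) + n - m)
    (hβ : β ≠ 0 → 2 * (β.natDegree : ℤ) ≤ (d : ℤ) + n + m)
    (hγ : γ ≠ 0 → 2 * (γ.natDegree : ℤ) ≤ (d : ℤ) - n - m)
    (hδ : δ ≠ 0 → 2 * (δ.natDegree : ℤ) ≤ (d : ℤ) - n + m)
    (lam : Fˣ) (hdet : α * δ - β * γ = C (lam : F) * f) :
    (m : ℤ) - n = d ∧ γ = 0 ∧ (α ≠ 0 ∧ α.natDegree = 0) ∧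
      ∃ μ : Fˣ, δ = C (μ : F) * f := by
  -- γ = 0
  have hγ0 : γ = 0 := by
    by_contra h
    have := hγ h
    omega
  subst hγ0
  rw [mul_zero, sub_zero] at hdet
  have hfne : f ≠ 0 := hmonic.ne_zero
  have hCne : C (lam : F) ≠ 0 := by
    simp [Units.ne_zero]
  have hrhs : C (lam : F) * f ≠ 0 := mul_ne_zero hCne hfne
  have hαne : α ≠ 0 := by
    intro h; rw [h, zero_mul] at hdet; exact hrhs hdet.symm
  have hδne : δ ≠ 0 := by
    intro h; rw [h, mul_zero] at hdet; exact hrhs hdet.symm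
  have hsum : α.natDegree + δ.natDegree = d := by
    have := congrArg natDegree hdet
    rwa [natDegree_mul hαne hδne, natDegree_mul hCne hfne, natDegree_C,
      zero_add, hd] at this
  -- irreducibility
  have hirr : Irreducible (C (lam : F) * f) :=
    (Associated.irreducible ⟨(Units.map (C : F →+* F[X]).toMonoidHom lam),
      (mul_comm _ _)⟩ hf)
  have hunit : IsUnit α ∨ IsUnit δ := hirr.isUnit_or_isUnit hdet.symm
  have hαdeg : α.natDegree = 0 := by
    rcases hunit with h | h
    · exact natDegree_eq_zero_of_isUnit h
    · have hδ0 : δ.natDegree = 0 := natDegree_eq_zero_of_isUnit h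
      have h1 := hα hαne
      omega
  have h2 := hα hαne
  have h3 := hδ hδne
  refine ⟨by omega, rfl, ⟨hαne, hαdeg⟩, ?_⟩
  -- α = C c
  obtain ⟨c, hc⟩ := natDegree_eq_zero.mp hαdeg
  have hcne : c ≠ 0 := by
    intro h; apply hαne; rw [← hc, h, map_zero]
  refine ⟨lam * (Units.mk0 c hcne)⁻¹, ?_⟩
  have key : C c * δ = C (lam : F) * f := by rw [hc]; exact hdet
  have : ((lam * (Units.mk0 c hcne)⁻¹ : Fˣ) : F) = (lam : F) * c⁻¹ := by
    simp
  rw [this]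
  have hCcne : (C c : F[X]) ≠ 0 := by simpa using hcne
  apply mul_left_cancel₀ hCcne
  rw [key, ← mul_assoc, ← C_mul]
  congr 2
  field_simp
end

section
/- Let n be a natural number and m = n + d. Suppose α, β, γ, δ ∈ 𝔽_q[t] satisfy 2·deg α ≤ d+n−m (i.e., α is constant), 2·deg β ≤ d+n+m (i.e., deg β ≤ d+n), 2·deg γ ≤ d−n−m (i.e., γ = 0), 2·deg δ ≤ d−n+m (i.e., deg δ ≤ d), and αδ − βγ = λf for some λ ∈ 𝔽_q^×. Then there exist μ₁, μ₂ ∈ 𝔽_q^×, a polynomial b ∈ 𝔽_q[t] with deg b ≤ n, and a polynomial r ∈ 𝔽_q[t] with deg r < d, such that the matrix (α β; γ δ) factors as (1 b; 0 μ₂) · (1 0; 0 f) · (μ₁ r; 0 1). In particular, all such matrices lie in a single (H_n, H_m)-double coset, namely that of diag(1, f). -/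
open Polynomial

/-- Case `m = n + d`: any matrix `(α β; γ δ)` over `𝔽_q[t]` with `α` constant,
`deg β ≤ d+n`, `γ = 0`, `deg δ ≤ d` and `αδ − βγ = λf` for a unit `λ` factors as
`(1 b; 0 μ₂) · (1 0; 0 f) · (μ₁ r; 0 1)` with `μ₁, μ₂` units, `deg b ≤ n`, `deg r < d`.
In particular all such matrices lie in the `(H_n, H_m)`-double coset of `diag(1, f)`. -/
theorem case_m_eq_n_add_d_single_double_coset
    (F : Type) [Field F] [Fintype F]
    (f : F[X]) (hf : Irreducible f) (hmonic : f.Monic)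
    (d : ℕ) (hd : f.natDegree = d) (hd1 : 1 ≤ d)
    (n m : ℕ) (hm : m = n + d)
    (α β γ δ : F[X])
    (hα : α.degree ≤ 0) (hβ : β.degree ≤ (d + n : ℕ))
    (hγ : γ = 0) (hδ : δ.degree ≤ (d : ℕ))
    (lam : Fˣ) (hdet : α * δ - β * γ = C (lam : F) * f) :
    ∃ (μ₁ μ₂ : Fˣ) (b r : F[X]), b.degree ≤ (n : ℕ) ∧ r.degree < (d : ℕ) ∧
      !![α, β; γ, δ] =
        !![1, b; 0, C (μ₂ : F)] * !![1, 0; 0, f] * !![C (μ₁ : F), r; 0, 1] := by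
  subst hγ
  have hf0 : f ≠ 0 := hmonic.ne_zero
  have hαδ : α * δ = C (lam : F) * f := by simpa using hdet
  have hαc : α = C (α.coeff 0) := eq_C_of_degree_le_zero hα
  have ha : α.coeff 0 ≠ 0 := by
    intro h
    have : α = 0 := by rw [hαc, h, map_zero]
    rw [this, zero_mul] at hαδ
    exact (mul_ne_zero (by simp [lam.ne_zero]) hf0) hαδ.symm
  set a := α.coeff 0 with ha'
  -- δ = C (a⁻¹ * lam) * f
  have hδeq : δ = C (a⁻¹ * (lam : F)) * f := by
    have h : C a * δ = C (lam : F) * f := by rw [← hαc]; exact hαδ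
    calc δ = C a⁻¹ * (C a * δ) := by
              rw [← mul_assoc, ← C_mul, inv_mul_cancel₀ ha, C_1, one_mul]
    _ = C a⁻¹ * (C (lam : F) * f) := by rw [h]
    _ = C (a⁻¹ * (lam : F)) * f := by rw [← mul_assoc, ← C_mul]
  set b := β /ₘ f with hbdef
  set r := β %ₘ f with hrdef
  have hβeq : β = b * f + r := by
    conv_lhs => rw [← modByMonic_add_div β f]
    rw [hbdef, hrdef]; ring
  have hr : r.degree < (d : ℕ) := by
    have := degree_modByMonic_lt β hmonic
    rwa [degree_eq_natDegree hf0, hd] at this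
  have hb : b.degree ≤ (n : ℕ) := by
    by_cases hb0 : b = 0
    · simp [hb0]
    · have h1 : (b * f).degree ≤ (d + n : ℕ) := by
        have : b * f = β - r := by rw [hβeq]; ring
        rw [this]
        refine (degree_sub_le _ _).trans (max_le hβ ?_)
        exact hr.le.trans (by exact_mod_cast Nat.cast_le.2 (Nat.le_add_right d n))
      have h2 : b.natDegree + d ≤ d + n := by
        have := natDegree_le_iff_degree_le.2 h1
        rwa [natDegree_mul hb0 hf0, hd] at this
      exact degree_le_of_natDegree_le (by omega)
  refine ⟨Units.mk0 a ha, lam * (Units.mk0 a ha)⁻¹, b, r, hb, hr, ?_⟩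
  ext i j
  fin_cases i <;> fin_cases j <;>
    simp [Matrix.mul_apply, Fin.sum_univ_succ, hαc, hδeq, hβeq, Units.val_mul] <;>
    ring
end

section
/- Let n ≤ m be natural numbers with m + n = d. Suppose M = (α β; γ δ) has entries in 𝔽_q[t] with deg α ≤ n, deg β ≤ d, deg γ ≤ 0 (i.e., γ is constant), deg δ ≤ m, and αδ − βγ = λf for some λ ∈ 𝔽_q^×. Then there exist μ ∈ 𝔽_q^×, h₁ ∈ H_n, and h₂ ∈ H_m such that M = μ · h₁ · (0 −f; 1 0) · h₂. (Moreover, if γ = 0 this forces n = 0.) In particular, all such matrices lie in a single (H_n, H_m)-double coset, namely that of the matrix (0 −f; 1 0). -/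
open Polynomial

/-- For `i ≥ 1`, `H i` is the set of upper-triangular matrices `(a b; 0 d)` with
`a, d ∈ 𝔽_q^×` and `b ∈ 𝔽_q[t]` of degree at most `i`; `H 0` is `GL₂(𝔽_q)`
(matrices with constant entries and invertible determinant), viewed inside the
matrices over `𝔽_q[t]`. -/
def Hset (F : Type) [Field F] (i : ℕ) : Set (Matrix (Fin 2) (Fin 2) F[X]) :=
  if i = 0 then
    {M | ∃ N : Matrix (Fin 2) (Fin 2) F, IsUnit N.det ∧ M = N.map Polynomial.C}
  else
    {M | ∃ (a e : Fˣ) (b : F[X]), b.degree ≤ (i : ℕ) ∧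
      M = !![Polynomial.C (a : F), b; 0, Polynomial.C (e : F)]}

lemma mem_Hset_tri (F : Type) [Field F] (i : ℕ) (a e : Fˣ) (b : F[X])
    (hb : b.degree ≤ (i : ℕ)) :
    !![Polynomial.C (a : F), b; 0, Polynomial.C (e : F)] ∈ Hset F i := by
  unfold Hset
  split_ifs with h
  · subst h
    refine ⟨!![(a : F), b.coeff 0; 0, (e : F)], ?_, ?_⟩
    · simpa [Matrix.det_fin_two_of] using (a.isUnit.mul e.isUnit)
    · have hb0 : b = C (b.coeff 0) := Polynomial.eq_C_of_degree_le_zero (by simpa using hb)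
      ext i j
      fin_cases i <;> fin_cases j <;> simp [Matrix.map_apply, ← hb0]
  · exact ⟨a, e, b, hb, rfl⟩

/-- Case `m + n = d`: any matrix `M = (α β; γ δ)` over `𝔽_q[t]` with `deg α ≤ n`,
`deg β ≤ d`, `γ` constant, `deg δ ≤ m` and `αδ − βγ = λf` for a unit `λ` satisfies
`M = μ · h₁ · (0 −f; 1 0) · h₂` with `μ ∈ 𝔽_q^×`, `h₁ ∈ H_n`, `h₂ ∈ H_m`; moreover
`γ = 0` forces `n = 0`. In particular all such matrices lie in a single
`(H_n, H_m)`-double coset, that of `(0 −f; 1 0)`. -/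
theorem case_m_add_n_eq_d_single_double_coset
    (F : Type) [Field F] [Fintype F]
    (f : F[X]) (hf : Irreducible f) (hmonic : f.Monic)
    (d : ℕ) (hd : f.natDegree = d) (hd1 : 1 ≤ d)
    (n m : ℕ) (hnm : n ≤ m) (hsum : m + n = d)
    (α β γ δ : F[X])
    (hα : α.degree ≤ (n : ℕ)) (hβ : β.degree ≤ (d : ℕ))
    (hγ : γ.degree ≤ 0) (hδ : δ.degree ≤ (m : ℕ))
    (lam : Fˣ) (hdet : α * δ - β * γ = C (lam : F) * f) :
    (∃ (μ : Fˣ) (h₁ h₂ : Matrix (Fin 2) (Fin 2) F[X]),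
        h₁ ∈ Hset F n ∧ h₂ ∈ Hset F m ∧
        !![α, β; γ, δ] = C (μ : F) • (h₁ * !![0, -f; 1, 0] * h₂)) ∧
      (γ = 0 → n = 0) := by
  have hm1 : 1 ≤ m := by omega
  have hf0 : f ≠ 0 := hmonic.ne_zero
  have hfd : f.degree = (d : ℕ) := by rw [Polynomial.degree_eq_natDegree hf0, hd]
  by_cases hg : γ = 0
  · -- γ = 0 case
    subst hg
    rw [mul_zero, sub_zero] at hdet
    have hirr : Irreducible (C (lam : F) * f) := by
      have : Associated f (C (lam : F) * f) :=
        ⟨Units.map (C : F →+* F[X]).toMonoidHom lam, by simp [mul_comm]⟩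
      exact this.irreducible hf
    rcases hirr.isUnit_or_isUnit hdet.symm with hu | hu
    · -- α is a unit
      rcases Polynomial.isUnit_iff.mp hu with ⟨a, ha, haα⟩
      have haa : a ≠ 0 := ha.ne_zero
      have hca : C a * δ = C (lam : F) * f := by rw [haα]; exact hdet
      have hδe : δ = C (a⁻¹ * (lam : F)) * f := by
        have h1 : C a⁻¹ * (C a * δ) = C a⁻¹ * (C (lam : F) * f) := by rw [hca]
        rw [← mul_assoc, ← C_mul, inv_mul_cancel₀ haa, C_1, one_mul] at h1
        rw [h1, ← mul_assoc, ← C_mul]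
      have hne : a⁻¹ * (lam : F) ≠ 0 := by simp [haa]
      have hδd : δ.degree = (d : ℕ) := by rw [hδe, degree_C_mul hne, hfd]
      have hdm : d ≤ m := by rw [hδd] at hδ; exact_mod_cast hδ
      have hn0 : n = 0 := by omega
      have hmd : m = d := by omega
      subst hn0
      refine ⟨⟨1, !![0, 1; 1, 0], _, ?_,
        mem_Hset_tri F m (Units.mk0 a haa)
          (Units.mk0 (-(a⁻¹ * (lam : F))) (by simpa using hne)) β (by rw [hmd]; exact hβ), ?_⟩,
        fun _ => rfl⟩
      · unfold Hset
        rw [if_pos rfl]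
        refine ⟨!![0, 1; 1, 0], by simp [Matrix.det_fin_two_of], ?_⟩
        ext i j
        fin_cases i <;> fin_cases j <;> simp [Matrix.map_apply]
      · ext i j
        fin_cases i <;> fin_cases j <;>
          simp [Matrix.mul_apply, Fin.sum_univ_two, haα.symm, hδe, map_neg, map_mul] <;> ring
    · -- δ is a unit : contradiction
      exfalso
      rcases Polynomial.isUnit_iff.mp hu with ⟨e, he, heδ⟩
      have hee : e ≠ 0 := he.ne_zero
      have hce : α * C e = C (lam : F) * f := by rw [heδ]; exact hdet
      have hαe : α = C (e⁻¹ * (lam : F)) * f := by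
        have h1 : (α * C e) * C e⁻¹ = (C (lam : F) * f) * C e⁻¹ := by rw [hce]
        rw [mul_assoc, ← C_mul, mul_inv_cancel₀ hee, C_1, mul_one] at h1
        rw [h1, C_mul]; ring
      have hne : e⁻¹ * (lam : F) ≠ 0 := by simp [hee]
      have hαd : α.degree = (d : ℕ) := by rw [hαe, degree_C_mul hne, hfd]
      have : d ≤ n := by rw [hαd] at hα; exact_mod_cast hα
      omega
  · -- γ ≠ 0 case
    have hγC : γ = C (γ.coeff 0) := Polynomial.eq_C_of_degree_le_zero hγ
    set c := γ.coeff 0 with hc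
    clear_value c
    have hc0 : c ≠ 0 := by
      intro h; apply hg; rw [hγC, h, C_0]
    have h3 : C c⁻¹ * C c = (1 : F[X]) := by rw [← C_mul, inv_mul_cancel₀ hc0, C_1]
    have hbd : (C c⁻¹ * δ).degree ≤ (m : ℕ) := by
      rw [degree_C_mul (inv_ne_zero hc0)]; exact hδ
    have hβeq : β = C c⁻¹ * α * δ - C c⁻¹ * C (lam : F) * f := by
      have h1 : α * δ - β * C c = C (lam : F) * f := by rw [← hγC]; exact hdet
      have h2 : C c⁻¹ * (α * δ - β * C c) = C c⁻¹ * (C (lam : F) * f) := by rw [h1]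
      linear_combination -h2 - β * h3
    refine ⟨⟨1, _, _, mem_Hset_tri F n 1 (Units.mk0 c hc0) α hα,
      mem_Hset_tri F m 1 (Units.mk0 (c⁻¹ * (lam : F)) (by simp [hc0])) (C c⁻¹ * δ) hbd, ?_⟩,
      fun h => absurd h hg⟩
    rw [hγC, ← Matrix.ext_iff]
    intro i j
    fin_cases i <;> fin_cases j
    · simp [Matrix.mul_apply, Fin.sum_univ_two, map_mul]
    · simp [Matrix.mul_apply, Fin.sum_univ_two, map_mul]
      linear_combination hβeq
    · simp [Matrix.mul_apply, Fin.sum_univ_two, map_mul]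
    · simp [Matrix.mul_apply, Fin.sum_univ_two, map_mul]
      linear_combination -δ * h3
end

section
/- Let n ≤ m be natural numbers with m + n < d and d − m − n even, and set l := (d − m − n)/2 (so l ≥ 1). Then the number of quadruples (α, β, γ, δ) ∈ 𝔽_q[t]⁴ with deg α ≤ l+n, deg β ≤ l+n+m, deg γ ≤ l, deg δ ≤ l+m, and αδ − βγ = λf for some λ ∈ 𝔽_q^×, equals (q−1)³ · q^{n+m} · (q^{2l+1} + q^{2l}) = (q−1)³ · (q+1) · q^d. -/
open Polynomial


lemma wb_lt_succ_iff_s6 {x : WithBot ℕ} {l : ℕ} :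
    x < ((l + 1 : ℕ) : WithBot ℕ) ↔ x ≤ ((l : ℕ) : WithBot ℕ) := by
  cases x with
  | bot =>
    simp only [Nat.cast_withBot]
    exact iff_of_true (WithBot.bot_lt_coe _) bot_le
  | coe k =>
    simp only [Nat.cast_withBot, WithBot.coe_lt_coe, WithBot.coe_le_coe, Nat.lt_succ_iff]

lemma wb_ne_bot (l : ℕ) : ((l : ℕ) : WithBot ℕ) ≠ ⊥ := by
  simp only [Nat.cast_withBot]; exact WithBot.coe_ne_bot

section Field
variable {F : Type} [Field F] [Fintype F] [DecidableEq F]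

noncomputable def degLTEquiv (F : Type) [Field F] (u : ℕ) :
    {p : F[X] // p.degree < (u : ℕ)} ≃ (Fin u → F) :=
  (Equiv.subtypeEquivRight (fun p => (mem_degreeLT (n := u)).symm)).trans
    (degreeLTEquiv F u).toEquiv

instance degLT_finite (u : ℕ) : Finite {p : F[X] // p.degree < (u : ℕ)} :=
  Finite.of_equiv _ (degLTEquiv F u).symm

lemma card_degLT (u : ℕ) :
    Nat.card {p : F[X] // p.degree < (u : ℕ)} = Fintype.card F ^ u := by
  rw [Nat.card_congr (degLTEquiv F u), Nat.card_eq_fintype_card]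
  simp

instance degLE_finite (n : ℕ) : Finite {p : F[X] // p.degree ≤ (n : ℕ)} :=
  Finite.of_equiv {p : F[X] // p.degree < ((n+1 : ℕ) : WithBot ℕ)}
    (Equiv.subtypeEquivRight (fun p => wb_lt_succ_iff_s6))

lemma card_degLE (n : ℕ) :
    Nat.card {p : F[X] // p.degree ≤ (n : ℕ)} = Fintype.card F ^ (n + 1) := by
  rw [Nat.card_congr (Equiv.subtypeEquivRight (fun p : F[X] => wb_lt_succ_iff_s6.symm)),
    card_degLT]

noncomputable def monicEquiv (k : ℕ) :
    {g : F[X] // g.Monic ∧ g.natDegree = k} ≃ {p : F[X] // p.degree < (k : ℕ)} where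
  toFun g := ⟨g.1 - X ^ k, by
    obtain ⟨g, hg, hk⟩ := g
    have hdeg : g.degree = (X ^ k : F[X]).degree := by
      rw [degree_X_pow, degree_eq_natDegree hg.ne_zero, hk]
    have := degree_sub_lt hdeg hg.ne_zero (by rw [hg.leadingCoeff, leadingCoeff_X_pow])
    rwa [hdeg, degree_X_pow] at this⟩
  invFun p := ⟨X ^ k + p.1, by
    obtain ⟨p, hp⟩ := p
    refine ⟨monic_X_pow_add ?_, ?_⟩
    · exact hp
    · have hd : (X ^ k + p).degree = ((k : ℕ) : WithBot ℕ) := by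
        rw [degree_add_eq_left_of_degree_lt, degree_X_pow]
        rwa [degree_X_pow]
      exact natDegree_eq_of_degree_eq_some (by simpa using hd)⟩
  left_inv g := Subtype.ext (by ring)
  right_inv p := Subtype.ext (by ring)

instance monic_finite (k : ℕ) : Finite {g : F[X] // g.Monic ∧ g.natDegree = k} :=
  Finite.of_equiv _ (monicEquiv (F := F) k).symm

lemma card_monic (k : ℕ) :
    Nat.card {g : F[X] // g.Monic ∧ g.natDegree = k} = Fintype.card F ^ k := by
  rw [Nat.card_congr (monicEquiv (F := F) k), card_degLT]






variable (F) in
abbrev CP (u v : ℕ) : Type :=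
  {p : F[X] × F[X] // IsCoprime p.1 p.2 ∧ p.1.degree < (u : ℕ) ∧ p.2.degree < (v : ℕ)}

variable (F) in
abbrev NZB (u v : ℕ) : Type :=
  {p : F[X] × F[X] // (p.1.degree < (u : ℕ) ∧ p.2.degree < (v : ℕ)) ∧ p ≠ 0}

lemma deg_mul_lt {g p : F[X]} (hg : g.Monic) {k u : ℕ} (hk : g.natDegree = k)
    (hp : p.degree < ((u - k : ℕ) : WithBot ℕ)) : (g * p).degree < (u : ℕ) := by
  rcases eq_or_ne p 0 with rfl | hp0
  · simp only [mul_zero, degree_zero, Nat.cast_withBot]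
    exact WithBot.bot_lt_coe _
  · have h1 : p.natDegree < u - k := (natDegree_lt_iff_degree_lt hp0).mpr hp
    have hgp : g * p ≠ 0 := mul_ne_zero hg.ne_zero hp0
    rw [← natDegree_lt_iff_degree_lt hgp, natDegree_mul hg.ne_zero hp0, hk]
    omega

lemma gcd_mul_coprime {g a b : F[X]} (hg : g.Monic) (hco : IsCoprime a b) :
    gcd (g * a) (g * b) = g := by
  classical
  rw [gcd_mul_left]
  have h1 : gcd a b = 1 := by
    rw [← normalize_gcd]
    exact normalize_eq_one.mpr ((gcd_isUnit_iff a b).mpr hco)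
  rw [h1, mul_one, hg.normalize_eq_self]

noncomputable def mulMap (u v : ℕ) :
    (Σ k : Fin v, {g : F[X] // g.Monic ∧ g.natDegree = (k : ℕ)} × CP F (u - k) (v - k)) →
    NZB F u v :=
  fun x => ⟨(x.2.1.1 * x.2.2.1.1, x.2.1.1 * x.2.2.1.2), by
    obtain ⟨k, ⟨g, hgm, hgk⟩, ⟨⟨a, b⟩, hco, ha, hb⟩⟩ := x
    refine ⟨⟨deg_mul_lt hgm hgk ha, deg_mul_lt hgm hgk hb⟩, ?_⟩
    intro h
    have h1 : g * a = 0 := congrArg Prod.fst h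
    have h2 : g * b = 0 := congrArg Prod.snd h
    have ha0 : a = 0 := by
      rcases mul_eq_zero.mp h1 with h' | h'
      · exact absurd h' hgm.ne_zero
      · exact h'
    have hb0 : b = 0 := by
      rcases mul_eq_zero.mp h2 with h' | h'
      · exact absurd h' hgm.ne_zero
      · exact h'
    rw [ha0, hb0] at hco
    exact not_isUnit_zero (isCoprime_zero_left.mp hco)⟩

lemma mulMap_bij (u v : ℕ) (huv : u ≤ v) : Function.Bijective (mulMap (F := F) u v) := by
  classical
  constructor
  · rintro ⟨k₁, s₁⟩ ⟨k₂, s₂⟩ h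
    simp only [mulMap, Subtype.mk.injEq, Prod.mk.injEq] at h
    obtain ⟨e1, e2⟩ := h
    have hg : s₁.1.1 = s₂.1.1 := by
      have t1 := gcd_mul_coprime s₁.1.2.1 s₁.2.2.1
      have t2 := gcd_mul_coprime s₂.1.2.1 s₂.2.2.1
      rw [← t1, ← t2, e1, e2]
    have hk : k₁ = k₂ := by
      apply Fin.ext
      rw [← s₁.1.2.2, ← s₂.1.2.2, hg]
    subst hk
    have hgne : s₁.1.1 ≠ 0 := s₁.1.2.1.ne_zero
    have hA : s₁.2.1.1 = s₂.2.1.1 := by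
      rw [hg] at e1
      exact mul_left_cancel₀ s₂.1.2.1.ne_zero e1
    have hB : s₁.2.1.2 = s₂.2.1.2 := by
      rw [hg] at e2
      exact mul_left_cancel₀ s₂.1.2.1.ne_zero e2
    congr 1
    refine Prod.ext (Subtype.ext hg) (Subtype.ext (Prod.ext hA hB))
  · rintro ⟨⟨a, b⟩, ⟨ha, hb⟩, hne⟩
    have hab : ¬(a = 0 ∧ b = 0) := by
      rintro ⟨rfl, rfl⟩
      exact hne rfl
    set g := gcd a b with hgdef
    have hg0 : g ≠ 0 := by
      rw [hgdef, Ne, gcd_eq_zero_iff]; exact hab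
    have hgm : g.Monic := by
      have := monic_normalize (p := g) hg0
      rwa [hgdef, normalize_gcd] at this
    have hdva : g ∣ a := gcd_dvd_left a b
    have hdvb : g ∣ b := gcd_dvd_right a b
    have hma : g * (a / g) = a := EuclideanDomain.mul_div_cancel' hg0 hdva
    have hmb : g * (b / g) = b := EuclideanDomain.mul_div_cancel' hg0 hdvb
    have hkv : g.natDegree < v := by
      rcases eq_or_ne b 0 with rfl | hb0
      · have ha0 : a ≠ 0 := fun h => hab ⟨h, rfl⟩
        have h1 : g.natDegree ≤ a.natDegree := natDegree_le_of_dvd hdva ha0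
        have h2 : a.natDegree < u := (natDegree_lt_iff_degree_lt ha0).mpr ha
        omega
      · have h1 : g.natDegree ≤ b.natDegree := natDegree_le_of_dvd hdvb hb0
        have h2 : b.natDegree < v := (natDegree_lt_iff_degree_lt hb0).mpr hb
        omega
    have hco : IsCoprime (a / g) (b / g) := by
      have h3 : g * gcd (a / g) (b / g) = g * 1 := by
        have h := gcd_mul_left g (a / g) (b / g)
        rw [hma, hmb, hgm.normalize_eq_self] at h
        rw [mul_one]
        exact h.symm.trans hgdef.symm
      exact (gcd_isUnit_iff _ _).mp
        ((mul_left_cancel₀ hg0 h3) ▸ isUnit_one)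
    have hda : (a / g).degree < ((u - g.natDegree : ℕ) : WithBot ℕ) := by
      rcases eq_or_ne a 0 with rfl | ha0
      · rw [EuclideanDomain.zero_div]
        simp only [degree_zero, Nat.cast_withBot]
        exact WithBot.bot_lt_coe _
      · have hq0 : a / g ≠ 0 := by
          intro h; rw [h, mul_zero] at hma; exact ha0 hma.symm
        have h4 : a.natDegree = g.natDegree + (a / g).natDegree := by
          conv_lhs => rw [← hma]
          rw [natDegree_mul hg0 hq0]
        have h5 : a.natDegree < u := (natDegree_lt_iff_degree_lt ha0).mpr ha
        rw [← natDegree_lt_iff_degree_lt hq0]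
        omega
    have hdb : (b / g).degree < ((v - g.natDegree : ℕ) : WithBot ℕ) := by
      rcases eq_or_ne b 0 with rfl | hb0
      · rw [EuclideanDomain.zero_div]
        simp only [degree_zero, Nat.cast_withBot]
        exact WithBot.bot_lt_coe _
      · have hq0 : b / g ≠ 0 := by
          intro h; rw [h, mul_zero] at hmb; exact hb0 hmb.symm
        have h4 : b.natDegree = g.natDegree + (b / g).natDegree := by
          conv_lhs => rw [← hmb]
          rw [natDegree_mul hg0 hq0]
        have h5 : b.natDegree < v := (natDegree_lt_iff_degree_lt hb0).mpr hb
        rw [← natDegree_lt_iff_degree_lt hq0]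
        omega
    refine ⟨⟨⟨g.natDegree, hkv⟩, ⟨g, hgm, rfl⟩, ⟨(a / g, b / g), hco, hda, hdb⟩⟩, ?_⟩
    exact Subtype.ext (Prod.ext hma hmb)





noncomputable def decompEquiv (u v : ℕ) (huv : u ≤ v) :
    (Σ k : Fin v, {g : F[X] // g.Monic ∧ g.natDegree = (k : ℕ)} × CP F (u - k) (v - k)) ≃
    NZB F u v :=
  Equiv.ofBijective _ (mulMap_bij u v huv)

instance CP_finite (a b : ℕ) : Finite (CP F a b) := by
  apply Finite.of_injective
    (fun x : CP F a b => ((⟨x.1.1, x.2.2.1⟩ : {p : F[X] // p.degree < (a : ℕ)}),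
      (⟨x.1.2, x.2.2.2⟩ : {p : F[X] // p.degree < (b : ℕ)})))
  rintro ⟨⟨a1, b1⟩, _⟩ ⟨⟨a2, b2⟩, _⟩ h
  simp only [Prod.mk.injEq, Subtype.mk.injEq] at h
  exact Subtype.ext (Prod.ext h.1 h.2)

instance NZB_finite (a b : ℕ) : Finite (NZB F a b) := by
  apply Finite.of_injective
    (fun x : NZB F a b => ((⟨x.1.1, x.2.1.1⟩ : {p : F[X] // p.degree < (a : ℕ)}),
      (⟨x.1.2, x.2.1.2⟩ : {p : F[X] // p.degree < (b : ℕ)})))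
  rintro ⟨⟨a1, b1⟩, _⟩ ⟨⟨a2, b2⟩, _⟩ h
  simp only [Prod.mk.injEq, Subtype.mk.injEq] at h
  exact Subtype.ext (Prod.ext h.1 h.2)

lemma card_NZB_sum (u v : ℕ) (huv : u ≤ v) :
    Nat.card (NZB F u v)
      = ∑ k ∈ Finset.range v, Fintype.card F ^ k * Nat.card (CP F (u - k) (v - k)) := by
  classical
  rw [← Nat.card_congr (decompEquiv (F := F) u v huv)]
  haveI : ∀ k : Fin v, Fintype ({g : F[X] // g.Monic ∧ g.natDegree = (k : ℕ)} × CP F (u - k) (v - k)) :=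
    fun k => Fintype.ofFinite _
  rw [Nat.card_eq_fintype_card, Fintype.card_sigma,
    ← Fin.sum_univ_eq_sum_range (fun k => Fintype.card F ^ k * Nat.card (CP F (u - k) (v - k))) v]
  refine Finset.sum_congr rfl (fun k _ => ?_)
  rw [← Nat.card_eq_fintype_card, Nat.card_prod, card_monic]

lemma card_NZB (u v : ℕ) :
    Nat.card (NZB F u v) + 1 = Fintype.card F ^ u * Fintype.card F ^ v := by
  classical
  have e1 : Nat.card {p : F[X] × F[X] // p.1.degree < (u : ℕ) ∧ p.2.degree < (v : ℕ)}
      = Fintype.card F ^ u * Fintype.card F ^ v := by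
    rw [Nat.card_congr (Equiv.subtypeProdEquivProd
      (p := fun p : F[X] => p.degree < (u : ℕ)) (q := fun p : F[X] => p.degree < (v : ℕ))),
      Nat.card_prod, card_degLT, card_degLT]
  set Box := {p : F[X] × F[X] // p.1.degree < (u : ℕ) ∧ p.2.degree < (v : ℕ)} with hBox
  haveI : Finite Box := by
    apply Finite.of_injective
      (fun x : Box => ((⟨x.1.1, x.2.1⟩ : {p : F[X] // p.degree < (u : ℕ)}),
        (⟨x.1.2, x.2.2⟩ : {p : F[X] // p.degree < (v : ℕ)})))
    rintro ⟨⟨a1, b1⟩, _⟩ ⟨⟨a2, b2⟩, _⟩ h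
    simp only [Prod.mk.injEq, Subtype.mk.injEq] at h
    exact Subtype.ext (Prod.ext h.1 h.2)
  have e2 : Nat.card Box
      = Nat.card {x : Box // x.1 = 0} + Nat.card {x : Box // ¬ x.1 = 0} := by
    rw [← Nat.card_sum, Nat.card_congr (Equiv.sumCompl (fun x : Box => x.1 = 0))]
  have e3 : Nat.card {x : Box // x.1 = 0} = 1 := by
    haveI : Unique {x : Box // x.1 = 0} := by
      refine ⟨⟨⟨⟨0, by
        constructor <;> · simp only [degree_zero, Nat.cast_withBot]; exact WithBot.bot_lt_coe _⟩,
        rfl⟩⟩, ?_⟩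
      rintro ⟨⟨p, hp⟩, hp0⟩
      apply Subtype.ext
      apply Subtype.ext
      exact hp0
    exact Nat.card_unique
  have e4 : Nat.card {x : Box // ¬ x.1 = 0} = Nat.card (NZB F u v) := by
    apply Nat.card_congr
    exact (Equiv.subtypeSubtypeEquivSubtypeInter
      (fun p : F[X] × F[X] => p.1.degree < (u : ℕ) ∧ p.2.degree < (v : ℕ))
      (fun p => ¬ p = 0))
  rw [e1.symm, e2, e3, e4]
  omega

lemma cpSumIdentity (u v : ℕ) (huv : u ≤ v) :
    (∑ k ∈ Finset.range v, Fintype.card F ^ k * Nat.card (CP F (u - k) (v - k))) + 1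
      = Fintype.card F ^ (u + v) := by
  rw [← card_NZB_sum u v huv, card_NZB, pow_add]

lemma T_formula (a b : ℕ) (hab : a ≤ b) :
    Nat.card (CP F (a + 1) (b + 1)) + (Fintype.card F ^ (a + b + 1) + 1)
      = Fintype.card F ^ (a + b + 2) + Fintype.card F := by
  have h1 := cpSumIdentity (F := F) (a + 1) (b + 1) (by omega)
  have h2 := cpSumIdentity (F := F) a b hab
  rw [Finset.sum_range_succ'] at h1
  have h3 : ∀ k, Fintype.card F ^ (k + 1) * Nat.card (CP F (a + 1 - (k + 1)) (b + 1 - (k + 1)))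
      = Fintype.card F * (Fintype.card F ^ k * Nat.card (CP F (a - k) (b - k))) := by
    intro k
    have e1 : a + 1 - (k + 1) = a - k := by omega
    have e2 : b + 1 - (k + 1) = b - k := by omega
    rw [e1, e2, pow_succ]
    ring
  simp only [h3] at h1
  rw [← Finset.mul_sum] at h1
  have e5 : a + 1 + (b + 1) = a + b + 2 := by omega
  rw [e5] at h1
  simp only [pow_zero, one_mul, Nat.sub_zero] at h1
  -- h1 : q * S + Nat.card (CP F (a+1) (b+1)) + 1 = q ^ (a+b+2)
  have h6 : Fintype.card F * ((∑ k ∈ Finset.range b,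
      Fintype.card F ^ k * Nat.card (CP F (a - k) (b - k))) + 1)
      = Fintype.card F ^ (a + b + 1) := by
    rw [h2, ← pow_succ']
  rw [mul_add, mul_one] at h6
  generalize hS : Fintype.card F * (∑ k ∈ Finset.range b,
      Fintype.card F ^ k * Nat.card (CP F (a - k) (b - k))) = S at h1 h6
  generalize Fintype.card F ^ (a + b + 2) = A at h1 ⊢
  generalize Fintype.card F ^ (a + b + 1) = B at h6 ⊢
  generalize Nat.card (CP F (a + 1) (b + 1)) = T at h1 ⊢
  omega



lemma wb_le_mono {a b : ℕ} (h : a ≤ b) : ((a : ℕ) : WithBot ℕ) ≤ ((b : ℕ) : WithBot ℕ) := by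
  simp only [Nat.cast_withBot, WithBot.coe_le_coe]; exact h

lemma wb_coe_inj {a b : ℕ} (h : ((a : ℕ) : WithBot ℕ) = ((b : ℕ) : WithBot ℕ)) : a = b := by
  simpa only [Nat.cast_withBot, WithBot.coe_inj] using h

variable (F) in
abbrev GoodPairs (l m : ℕ) : Type :=
  {p : F[X] × F[X] // (p.1.degree ≤ ((l : ℕ) : WithBot ℕ) ∧ p.2.degree ≤ ((l + m : ℕ) : WithBot ℕ)) ∧
    (IsCoprime p.1 p.2 ∧ (p.1.degree = ((l : ℕ) : WithBot ℕ) ∨ p.2.degree = ((l + m : ℕ) : WithBot ℕ)))}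

lemma card_good (l m : ℕ) :
    Nat.card (GoodPairs F l m) + Nat.card (CP F l (l + m))
      = Nat.card (CP F (l + 1) (l + m + 1)) := by
  classical
  haveI : Fintype (CP F (l + 1) (l + m + 1)) := Fintype.ofFinite _
  set pred := fun x : CP F (l + 1) (l + m + 1) =>
    x.1.1.degree = ((l : ℕ) : WithBot ℕ) ∨ x.1.2.degree = ((l + m : ℕ) : WithBot ℕ) with hpred
  have e0 : Nat.card (CP F (l + 1) (l + m + 1))
      = Nat.card {x : CP F (l + 1) (l + m + 1) // pred x}
        + Nat.card {x : CP F (l + 1) (l + m + 1) // ¬ pred x} := by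
    rw [← Nat.card_sum, Nat.card_congr (Equiv.sumCompl pred)]
  have e1 : Nat.card {x : CP F (l + 1) (l + m + 1) // pred x} = Nat.card (GoodPairs F l m) := by
    apply Nat.card_congr
    refine (Equiv.subtypeSubtypeEquivSubtypeInter
      (fun p : F[X] × F[X] => IsCoprime p.1 p.2 ∧ p.1.degree < ((l + 1 : ℕ) : WithBot ℕ) ∧
        p.2.degree < ((l + m + 1 : ℕ) : WithBot ℕ))
      (fun p : F[X] × F[X] => p.1.degree = ((l : ℕ) : WithBot ℕ) ∨
        p.2.degree = ((l + m : ℕ) : WithBot ℕ))).trans (Equiv.subtypeEquivRight ?_)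
    intro p
    constructor
    · rintro ⟨⟨hc, h1, h2⟩, hor⟩
      exact ⟨⟨wb_lt_succ_iff_s6.mp h1, wb_lt_succ_iff_s6.mp h2⟩, hc, hor⟩
    · rintro ⟨⟨h1, h2⟩, hc, hor⟩
      exact ⟨⟨hc, wb_lt_succ_iff_s6.mpr h1, wb_lt_succ_iff_s6.mpr h2⟩, hor⟩
  have e2 : Nat.card {x : CP F (l + 1) (l + m + 1) // ¬ pred x} = Nat.card (CP F l (l + m)) := by
    apply Nat.card_congr
    refine (Equiv.subtypeSubtypeEquivSubtypeInter
      (fun p : F[X] × F[X] => IsCoprime p.1 p.2 ∧ p.1.degree < ((l + 1 : ℕ) : WithBot ℕ) ∧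
        p.2.degree < ((l + m + 1 : ℕ) : WithBot ℕ))
      (fun p : F[X] × F[X] => ¬(p.1.degree = ((l : ℕ) : WithBot ℕ) ∨
        p.2.degree = ((l + m : ℕ) : WithBot ℕ)))).trans (Equiv.subtypeEquivRight ?_)
    intro p
    constructor
    · rintro ⟨⟨hc, h1, h2⟩, hor⟩
      push_neg at hor
      exact ⟨hc, lt_of_le_of_ne (wb_lt_succ_iff_s6.mp h1) hor.1,
        lt_of_le_of_ne (wb_lt_succ_iff_s6.mp h2) hor.2⟩
    · rintro ⟨hc, h1, h2⟩
      refine ⟨⟨hc, wb_lt_succ_iff_s6.mpr (le_of_lt h1), wb_lt_succ_iff_s6.mpr (le_of_lt h2)⟩, ?_⟩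
      push_neg
      exact ⟨ne_of_lt h1, ne_of_lt h2⟩
  rw [e0, e1, e2]

section Fib

variable {f : F[X]} {d n m l : ℕ}

variable (f n m l) in
abbrev Fib (lam : Fˣ) (γ δ : F[X]) : Type :=
  {ab : F[X] × F[X] // ab.1.degree ≤ ((l + n : ℕ) : WithBot ℕ) ∧
    ab.2.degree ≤ ((l + n + m : ℕ) : WithBot ℕ) ∧
    ab.1 * δ - ab.2 * γ = C (lam : F) * f}

lemma deg_Cf (hm : f.Monic) (hd : f.natDegree = d) (lam : Fˣ) :
    (C (lam : F) * f).degree = ((d : ℕ) : WithBot ℕ) := by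
  rw [degree_mul, degree_C (Units.ne_zero lam), zero_add, degree_eq_natDegree hm.ne_zero, hd]

lemma fib_empty (hf : Irreducible f) (hm : f.Monic) (hd : f.natDegree = d)
    (hl : d = 2 * l + n + m) (hl1 : 1 ≤ l) (lam : Fˣ) {γ δ : F[X]}
    (hγ : γ.degree ≤ ((l : ℕ) : WithBot ℕ)) (hδ : δ.degree ≤ ((l + m : ℕ) : WithBot ℕ))
    (hnot : ¬(IsCoprime γ δ ∧ (γ.degree = ((l : ℕ) : WithBot ℕ) ∨ δ.degree = ((l + m : ℕ) : WithBot ℕ)))) :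
    IsEmpty (Fib f n m l lam γ δ) := by
  classical
  constructor
  rintro ⟨⟨a, b⟩, hA, hB, heq⟩
  apply hnot
  have hCf0 : C (lam : F) * f ≠ 0 := mul_ne_zero (by simp [Units.ne_zero lam]) hm.ne_zero
  have hCfdeg : (C (lam : F) * f).degree = ((d : ℕ) : WithBot ℕ) := deg_Cf hm hd lam
  have hγδ0 : ¬(γ = 0 ∧ δ = 0) := by
    rintro ⟨rfl, rfl⟩
    apply hCf0
    rw [← heq]; ring
  have hco : IsCoprime γ δ := by
    have hdvd : gcd γ δ ∣ C (lam : F) * f := by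
      rw [← heq]
      exact dvd_sub ((gcd_dvd_right γ δ).mul_left a) ((gcd_dvd_left γ δ).mul_left b)
    have hCff : C (lam : F) * f ∣ f := by
      refine ⟨C ((lam⁻¹ : Fˣ) : F), ?_⟩
      rw [mul_right_comm, ← C_mul]
      norm_num
    have hdf : gcd γ δ ∣ f := hdvd.trans hCff
    by_contra hnc
    have hgu : ¬ IsUnit (gcd γ δ) := fun h => hnc ((gcd_isUnit_iff _ _).mp h)
    obtain ⟨c, hc⟩ := hdf
    rcases hf.isUnit_or_isUnit hc with h | h
    · exact hgu h
    · have hg0 : gcd γ δ ≠ 0 := by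
        rw [Ne, gcd_eq_zero_iff]; exact hγδ0
      have hc0 : c ≠ 0 := h.ne_zero
      have hfd : f.natDegree = (gcd γ δ).natDegree + c.natDegree := by
        rw [hc, natDegree_mul hg0 hc0]
      have hcd0 : c.natDegree = 0 := natDegree_eq_zero_of_isUnit h
      rcases eq_or_ne γ 0 with rfl | hγ0
      · have hδ0 : δ ≠ 0 := fun h0 => hγδ0 ⟨rfl, h0⟩
        have h1 : (gcd (0 : F[X]) δ).natDegree ≤ δ.natDegree :=
          natDegree_le_of_dvd (gcd_dvd_right _ _) hδ0
        have h2 : δ.natDegree ≤ l + m := natDegree_le_iff_degree_le.mpr hδ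
        omega
      · have h1 : (gcd γ δ).natDegree ≤ γ.natDegree :=
          natDegree_le_of_dvd (gcd_dvd_left _ _) hγ0
        have h2 : γ.natDegree ≤ l := natDegree_le_iff_degree_le.mpr hγ
        omega
  refine ⟨hco, ?_⟩
  by_contra hnor
  push_neg at hnor
  obtain ⟨hne1, hne2⟩ := hnor
  have hlt1 : γ.degree < ((l : ℕ) : WithBot ℕ) := lt_of_le_of_ne hγ hne1
  have hlt2 : δ.degree < ((l + m : ℕ) : WithBot ℕ) := lt_of_le_of_ne hδ hne2
  have hAD : (a * δ).degree < ((d : ℕ) : WithBot ℕ) := by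
    rcases eq_or_ne (a * δ) 0 with h0 | h0
    · rw [h0, degree_zero]
      simp only [Nat.cast_withBot]
      exact WithBot.bot_lt_coe _
    · have ha0 : a ≠ 0 := left_ne_zero_of_mul h0
      have hδ0 : δ ≠ 0 := right_ne_zero_of_mul h0
      rw [← natDegree_lt_iff_degree_lt h0, natDegree_mul ha0 hδ0]
      have t1 : a.natDegree ≤ l + n := natDegree_le_iff_degree_le.mpr hA
      have t2 : δ.natDegree < l + m := (natDegree_lt_iff_degree_lt hδ0).mpr hlt2
      omega
  have hBG : (b * γ).degree < ((d : ℕ) : WithBot ℕ) := by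
    rcases eq_or_ne (b * γ) 0 with h0 | h0
    · rw [h0, degree_zero]
      simp only [Nat.cast_withBot]
      exact WithBot.bot_lt_coe _
    · have hb0 : b ≠ 0 := left_ne_zero_of_mul h0
      have hγ0 : γ ≠ 0 := right_ne_zero_of_mul h0
      rw [← natDegree_lt_iff_degree_lt h0, natDegree_mul hb0 hγ0]
      have t1 : b.natDegree ≤ l + n + m := natDegree_le_iff_degree_le.mpr hB
      have t2 : γ.natDegree < l := (natDegree_lt_iff_degree_lt hγ0).mpr hlt1
      omega
  have hfinal : (a * δ - b * γ).degree < ((d : ℕ) : WithBot ℕ) :=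
    lt_of_le_of_lt (degree_sub_le _ _) (max_lt hAD hBG)
  rw [heq, hCfdeg] at hfinal
  exact lt_irrefl _ hfinal

end Fib

end Field

section Fib2
variable {F : Type} [Field F] [Fintype F] [DecidableEq F]
variable {f : F[X]} {d n m l : ℕ}

lemma fib_nonempty (hm : f.Monic) (hd : f.natDegree = d)
    (hl : d = 2 * l + n + m) (hl1 : 1 ≤ l) (lam : Fˣ) {γ δ : F[X]}
    (hγ : γ.degree ≤ ((l : ℕ) : WithBot ℕ)) (hδ : δ.degree ≤ ((l + m : ℕ) : WithBot ℕ))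
    (hco : IsCoprime γ δ)
    (hor : γ.degree = ((l : ℕ) : WithBot ℕ) ∨ δ.degree = ((l + m : ℕ) : WithBot ℕ)) :
    Nonempty (Fib f n m l lam γ δ) := by
  classical
  obtain ⟨p, r, hpr⟩ := hco
  have hCfdeg : (C (lam : F) * f).degree = ((d : ℕ) : WithBot ℕ) := deg_Cf hm hd lam
  rcases hor with hcγ | hcδ
  · -- reduce first coordinate mod γ
    have hγ0 : γ ≠ 0 := by
      intro h0
      rw [h0, degree_zero] at hcγ
      exact wb_ne_bot l hcγ.symm
    have hγl : γ.natDegree = l := natDegree_eq_of_degree_eq_some hcγ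
    set γm := γ * C (γ.leadingCoeff)⁻¹ with hγmdef
    have hγm : γm.Monic := monic_mul_leadingCoeff_inv hγ0
    set A := (C (lam : F) * f * r) %ₘ γm with hAdef
    set s := C (γ.leadingCoeff)⁻¹ * ((C (lam : F) * f * r) /ₘ γm) with hsdef
    have hsplit : γ * s + A = C (lam : F) * f * r := by
      have h1 := modByMonic_add_div (C (lam : F) * f * r) γm
      calc γ * s + A = A + γm * ((C (lam : F) * f * r) /ₘ γm) := by
            rw [hγmdef, hsdef]; ring
        _ = C (lam : F) * f * r := h1
    set B := -(C (lam : F) * f * p) - s * δ with hBdef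
    have heq : A * δ - B * γ = C (lam : F) * f := by
      have hA : A = C (lam : F) * f * r - γ * s := by
        rw [← hsplit]; ring
      rw [hA, hBdef]
      linear_combination (C (lam : F) * f) * hpr
    have hdegA : A.degree < ((l : ℕ) : WithBot ℕ) := by
      have h2 := degree_modByMonic_lt (C (lam : F) * f * r) hγm
      rw [degree_mul_leadingCoeff_inv γ hγ0, hcγ] at h2
      exact h2
    have hA_le : A.degree ≤ ((l + n : ℕ) : WithBot ℕ) :=
      le_trans (le_of_lt hdegA) (wb_le_mono (by omega))
    have hBle : B.degree ≤ ((l + n + m : ℕ) : WithBot ℕ) := by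
      rcases eq_or_ne B 0 with hB0 | hB0
      · rw [hB0, degree_zero]; exact bot_le
      · have hBγ : B * γ = A * δ - C (lam : F) * f := by linear_combination -heq
        have hd1 : (A * δ).degree ≤ ((d : ℕ) : WithBot ℕ) := by
          rcases eq_or_ne A 0 with hA0 | hA0
          · rw [hA0, zero_mul, degree_zero]; exact bot_le
          · rw [← natDegree_le_iff_degree_le]
            refine le_trans natDegree_mul_le ?_
            have t1 : A.natDegree < l := (natDegree_lt_iff_degree_lt hA0).mpr hdegA
            have t2 : δ.natDegree ≤ l + m := natDegree_le_iff_degree_le.mpr hδ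
            omega
        have hd2 : (B * γ).degree ≤ ((d : ℕ) : WithBot ℕ) := by
          rw [hBγ]
          exact le_trans (degree_sub_le _ _) (max_le hd1 (le_of_eq hCfdeg))
        have h3 : (B * γ).natDegree ≤ d := natDegree_le_iff_degree_le.mpr hd2
        rw [natDegree_mul hB0 hγ0, hγl] at h3
        rw [← natDegree_le_iff_degree_le]
        omega
    exact ⟨⟨(A, B), hA_le, hBle, heq⟩⟩
  · -- reduce second coordinate mod δ
    have hδ0 : δ ≠ 0 := by
      intro h0
      rw [h0, degree_zero] at hcδ
      exact wb_ne_bot (l + m) hcδ.symm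
    have hδl : δ.natDegree = l + m := natDegree_eq_of_degree_eq_some hcδ
    set δm := δ * C (δ.leadingCoeff)⁻¹ with hδmdef
    have hδm : δm.Monic := monic_mul_leadingCoeff_inv hδ0
    set B := (-(C (lam : F) * f * p)) %ₘ δm with hBdef
    set s := C (δ.leadingCoeff)⁻¹ * ((-(C (lam : F) * f * p)) /ₘ δm) with hsdef
    have hsplit : δ * s + B = -(C (lam : F) * f * p) := by
      have h1 := modByMonic_add_div (-(C (lam : F) * f * p)) δm
      calc δ * s + B = B + δm * ((-(C (lam : F) * f * p)) /ₘ δm) := by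
            rw [hδmdef, hsdef]; ring
        _ = -(C (lam : F) * f * p) := h1
    set A := C (lam : F) * f * r - s * γ with hAdef
    have heq : A * δ - B * γ = C (lam : F) * f := by
      have hB : B = -(C (lam : F) * f * p) - δ * s := by
        rw [← hsplit]; ring
      rw [hB, hAdef]
      linear_combination (C (lam : F) * f) * hpr
    have hdegB : B.degree < ((l + m : ℕ) : WithBot ℕ) := by
      have h2 := degree_modByMonic_lt (-(C (lam : F) * f * p)) hδm
      rw [degree_mul_leadingCoeff_inv δ hδ0, hcδ] at h2
      exact h2
    have hB_le : B.degree ≤ ((l + n + m : ℕ) : WithBot ℕ) :=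
      le_trans (le_of_lt hdegB) (wb_le_mono (by omega))
    have hAle : A.degree ≤ ((l + n : ℕ) : WithBot ℕ) := by
      rcases eq_or_ne A 0 with hA0 | hA0
      · rw [hA0, degree_zero]; exact bot_le
      · have hAδ : A * δ = C (lam : F) * f + B * γ := by linear_combination heq
        have hd1 : (B * γ).degree ≤ ((d : ℕ) : WithBot ℕ) := by
          rcases eq_or_ne B 0 with hB0 | hB0
          · rw [hB0, zero_mul, degree_zero]; exact bot_le
          · rw [← natDegree_le_iff_degree_le]
            refine le_trans natDegree_mul_le ?_
            have t1 : B.natDegree < l + m := (natDegree_lt_iff_degree_lt hB0).mpr hdegB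
            have t2 : γ.natDegree ≤ l := natDegree_le_iff_degree_le.mpr hγ
            omega
        have hd2 : (A * δ).degree ≤ ((d : ℕ) : WithBot ℕ) := by
          rw [hAδ]
          exact le_trans (degree_add_le _ _) (max_le (le_of_eq hCfdeg) hd1)
        have h3 : (A * δ).natDegree ≤ d := natDegree_le_iff_degree_le.mpr hd2
        rw [natDegree_mul hA0 hδ0, hδl] at h3
        rw [← natDegree_le_iff_degree_le]
        omega
    exact ⟨⟨(A, B), hAle, hB_le, heq⟩⟩

lemma fib_card (hm : f.Monic) (hd : f.natDegree = d)
    (hl : d = 2 * l + n + m) (hl1 : 1 ≤ l) (lam : Fˣ) {γ δ : F[X]}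
    (hγ : γ.degree ≤ ((l : ℕ) : WithBot ℕ)) (hδ : δ.degree ≤ ((l + m : ℕ) : WithBot ℕ))
    (hco : IsCoprime γ δ)
    (hor : γ.degree = ((l : ℕ) : WithBot ℕ) ∨ δ.degree = ((l + m : ℕ) : WithBot ℕ)) :
    Nat.card (Fib f n m l lam γ δ) = Fintype.card F ^ (n + 1) := by
  classical
  obtain ⟨⟨⟨A₀, B₀⟩, h1, h2, heq0⟩⟩ := fib_nonempty hm hd hl hl1 lam hγ hδ hco hor
  have hγ0 : γ ≠ 0 := by
    intro h0
    rcases hor with hcγ | hcδ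
    · rw [h0, degree_zero] at hcγ
      exact wb_ne_bot l hcγ.symm
    · rw [h0] at hco
      have hu : IsUnit δ := isCoprime_zero_left.mp hco
      have := degree_eq_zero_of_isUnit hu
      rw [this] at hcδ
      have : l + m = 0 := (wb_coe_inj (a := 0) (by simpa using hcδ)).symm
      omega
  have key : ∀ g : F[X], g.degree ≤ ((n : ℕ) : WithBot ℕ) →
      (A₀ + g * γ).degree ≤ ((l + n : ℕ) : WithBot ℕ) ∧
      (B₀ + g * δ).degree ≤ ((l + n + m : ℕ) : WithBot ℕ) ∧
      (A₀ + g * γ) * δ - (B₀ + g * δ) * γ = C (lam : F) * f := by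
    intro g hg
    have hgn : g.natDegree ≤ n := natDegree_le_iff_degree_le.mpr hg
    refine ⟨?_, ?_, by linear_combination heq0⟩
    · refine le_trans (degree_add_le _ _) (max_le h1 ?_)
      rw [← natDegree_le_iff_degree_le]
      refine le_trans natDegree_mul_le ?_
      have : γ.natDegree ≤ l := natDegree_le_iff_degree_le.mpr hγ
      omega
    · refine le_trans (degree_add_le _ _) (max_le h2 ?_)
      rw [← natDegree_le_iff_degree_le]
      refine le_trans natDegree_mul_le ?_
      have : δ.natDegree ≤ l + m := natDegree_le_iff_degree_le.mpr hδ
      omega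
  set Ψ : {g : F[X] // g.degree ≤ ((n : ℕ) : WithBot ℕ)} → Fib f n m l lam γ δ :=
    fun g => ⟨(A₀ + g.1 * γ, B₀ + g.1 * δ), key g.1 g.2⟩ with hΨ
  have hbij : Function.Bijective Ψ := by
    constructor
    · rintro ⟨g₁, hg₁⟩ ⟨g₂, hg₂⟩ h
      have h' : A₀ + g₁ * γ = A₀ + g₂ * γ := congrArg (fun z => z.1.1) h
      apply Subtype.ext
      have : g₁ * γ = g₂ * γ := by
        have := add_left_cancel h'
        exact this
      exact mul_right_cancel₀ hγ0 this
    · rintro ⟨⟨a, b⟩, ha, hb, heq⟩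
      have hsub : (a - A₀) * δ = (b - B₀) * γ := by linear_combination heq - heq0
      have hdvd : γ ∣ (a - A₀) := by
        refine hco.dvd_of_dvd_mul_right ?_
        rw [hsub]
        exact dvd_mul_left γ (b - B₀)
      set g := (a - A₀) / γ with hgdef
      have hg1 : γ * g = a - A₀ := EuclideanDomain.mul_div_cancel' hγ0 hdvd
      have hg2 : b - B₀ = g * δ := by
        apply mul_right_cancel₀ hγ0
        rw [← hsub, ← hg1]
        ring
      have hgdeg : g.degree ≤ ((n : ℕ) : WithBot ℕ) := by
        rcases eq_or_ne g 0 with hg0 | hg0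
        · rw [hg0, degree_zero]; exact bot_le
        · rcases hor with hcγ | hcδ
          · have hγl : γ.natDegree = l := natDegree_eq_of_degree_eq_some hcγ
            have h5 : (a - A₀).degree ≤ ((l + n : ℕ) : WithBot ℕ) :=
              le_trans (degree_sub_le _ _) (max_le ha h1)
            have h6 : (a - A₀).natDegree ≤ l + n := natDegree_le_iff_degree_le.mpr h5
            rw [← hg1, natDegree_mul hγ0 hg0, hγl] at h6
            rw [← natDegree_le_iff_degree_le]
            omega
          · have hδ0 : δ ≠ 0 := by
              intro h0
              rw [h0, degree_zero] at hcδ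
              exact wb_ne_bot (l + m) hcδ.symm
            have hδl : δ.natDegree = l + m := natDegree_eq_of_degree_eq_some hcδ
            have h5 : (b - B₀).degree ≤ ((l + n + m : ℕ) : WithBot ℕ) :=
              le_trans (degree_sub_le _ _) (max_le hb h2)
            have h6 : (b - B₀).natDegree ≤ l + n + m := natDegree_le_iff_degree_le.mpr h5
            rw [hg2, natDegree_mul hg0 hδ0, hδl] at h6
            rw [← natDegree_le_iff_degree_le]
            omega
      refine ⟨⟨g, hgdeg⟩, ?_⟩
      apply Subtype.ext
      refine Prod.ext ?_ ?_
      · show A₀ + g * γ = a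
        linear_combination hg1
      · show B₀ + g * δ = b
        linear_combination -hg2
  rw [← Nat.card_congr (Equiv.ofBijective Ψ hbij), card_degLE]

end Fib2


/-- Case `m + n < d`, `l = (d − m − n)/2 ≥ 1`: the number of quadruples
`(α, β, γ, δ)` of polynomials over `𝔽_q` with `deg α ≤ l+n`, `deg β ≤ l+n+m`,
`deg γ ≤ l`, `deg δ ≤ l+m` and `αδ − βγ = λf` for some unit `λ` equals
`(q−1)³ · q^(n+m) · (q^(2l+1) + q^(2l)) = (q−1)³ · (q+1) · q^d`. -/
theorem card_Upsilon_matrices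
    (F : Type) [Field F] [Fintype F] (q : ℕ) (hq : Fintype.card F = q)
    (f : F[X]) (hf : Irreducible f) (hmonic : f.Monic)
    (d n m l : ℕ) (hd : f.natDegree = d) (hnm : n ≤ m)
    (hl : d = 2 * l + n + m) (hl1 : 1 ≤ l) :
    Nat.card {x : F[X] × F[X] × F[X] × F[X] //
        x.1.degree ≤ (l + n : ℕ) ∧ x.2.1.degree ≤ (l + n + m : ℕ) ∧
        x.2.2.1.degree ≤ (l : ℕ) ∧ x.2.2.2.degree ≤ (l + m : ℕ) ∧
        ∃ lam : Fˣ, x.1 * x.2.2.2 - x.2.1 * x.2.2.1 = C (lam : F) * f} =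
      (q - 1) ^ 3 * q ^ (n + m) * (q ^ (2 * l + 1) + q ^ (2 * l)) ∧
    (q - 1) ^ 3 * q ^ (n + m) * (q ^ (2 * l + 1) + q ^ (2 * l)) =
      (q - 1) ^ 3 * (q + 1) * q ^ d := by
  classical
  subst hq
  refine ⟨?_, by rw [hl]; ring⟩
  obtain ⟨l0, rfl⟩ : ∃ l0, l = l0 + 1 := ⟨l - 1, by omega⟩
  set l := l0 + 1 with hldef
  set Q := Fintype.card F with hQ
  have hq2 : 2 ≤ Q := Fintype.one_lt_card
  set PB := {p : F[X] × F[X] // p.1.degree ≤ ((l : ℕ) : WithBot ℕ) ∧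
    p.2.degree ≤ ((l + m : ℕ) : WithBot ℕ)} with hPB
  haveI : Finite PB := by
    apply Finite.of_injective (fun x : PB =>
      ((⟨x.1.1, x.2.1⟩ : {p : F[X] // p.degree ≤ ((l : ℕ) : WithBot ℕ)}),
       (⟨x.1.2, x.2.2⟩ : {p : F[X] // p.degree ≤ ((l + m : ℕ) : WithBot ℕ)})))
    rintro ⟨⟨u1, u2⟩, _⟩ ⟨⟨v1, v2⟩, _⟩ hx
    simp only [Prod.mk.injEq, Subtype.mk.injEq] at hx
    exact Subtype.ext (Prod.ext hx.1 hx.2)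
  haveI : Fintype PB := Fintype.ofFinite _
  haveI hFibFin : ∀ z : Fˣ × PB, Finite (Fib f n m l z.1 z.2.1.1 z.2.1.2) := by
    intro z
    apply Finite.of_injective (fun x : Fib f n m l z.1 z.2.1.1 z.2.1.2 =>
      ((⟨x.1.1, x.2.1⟩ : {p : F[X] // p.degree ≤ ((l + n : ℕ) : WithBot ℕ)}),
       (⟨x.1.2, x.2.2.1⟩ : {p : F[X] // p.degree ≤ ((l + n + m : ℕ) : WithBot ℕ)})))
    rintro ⟨⟨u1, u2⟩, _⟩ ⟨⟨v1, v2⟩, _⟩ hx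
    simp only [Prod.mk.injEq, Subtype.mk.injEq] at hx
    exact Subtype.ext (Prod.ext hx.1 hx.2)
  haveI : ∀ z : Fˣ × PB, Fintype (Fib f n m l z.1 z.2.1.1 z.2.1.2) :=
    fun z => Fintype.ofFinite _
  have hbij : Function.Bijective
      (fun x : (Σ z : Fˣ × PB, Fib f n m l z.1 z.2.1.1 z.2.1.2) =>
        (⟨(x.2.1.1, x.2.1.2, x.1.2.1.1, x.1.2.1.2),
          x.2.2.1, x.2.2.2.1, x.1.2.2.1, x.1.2.2.2, ⟨x.1.1, x.2.2.2.2⟩⟩ :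
          {x : F[X] × F[X] × F[X] × F[X] //
            x.1.degree ≤ ((l + n : ℕ) : WithBot ℕ) ∧
            x.2.1.degree ≤ ((l + n + m : ℕ) : WithBot ℕ) ∧
            x.2.2.1.degree ≤ ((l : ℕ) : WithBot ℕ) ∧
            x.2.2.2.degree ≤ ((l + m : ℕ) : WithBot ℕ) ∧
            ∃ lam : Fˣ, x.1 * x.2.2.2 - x.2.1 * x.2.2.1 = C (lam : F) * f})) := by
    constructor
    · rintro ⟨⟨lam₁, ⟨⟨g₁, d₁⟩, hbx₁⟩⟩, ⟨⟨a₁, b₁⟩, ha₁, hb₁, he₁⟩⟩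
        ⟨⟨lam₂, ⟨⟨g₂, d₂⟩, hbx₂⟩⟩, ⟨⟨a₂, b₂⟩, ha₂, hb₂, he₂⟩⟩ h
      simp only [Subtype.mk.injEq, Prod.mk.injEq] at h
      obtain ⟨h1, h2, h3, h4⟩ := h
      subst h1; subst h2; subst h3; subst h4
      have hlam : lam₁ = lam₂ :=
        Units.ext (C_inj.mp (mul_right_cancel₀ hmonic.ne_zero (he₁.symm.trans he₂)))
      subst hlam
      rfl
    · rintro ⟨⟨a, b, g, dd⟩, ha, hb, hg, hdd, ⟨lam, heq⟩⟩
      exact ⟨⟨⟨lam, ⟨(g, dd), hg, hdd⟩⟩, ⟨(a, b), ha, hb, heq⟩⟩, rfl⟩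
  rw [Nat.card_congr (Equiv.ofBijective _ hbij).symm, Nat.card_eq_fintype_card,
    Fintype.card_sigma]
  have e2 : ∀ z : Fˣ × PB, Fintype.card (Fib f n m l z.1 z.2.1.1 z.2.1.2)
      = (if IsCoprime z.2.1.1 z.2.1.2 ∧ (z.2.1.1.degree = ((l : ℕ) : WithBot ℕ) ∨
          z.2.1.2.degree = ((l + m : ℕ) : WithBot ℕ)) then Q ^ (n + 1) else 0) := by
    intro z
    rw [← Nat.card_eq_fintype_card]
    by_cases hgz : IsCoprime z.2.1.1 z.2.1.2 ∧ (z.2.1.1.degree = ((l : ℕ) : WithBot ℕ) ∨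
        z.2.1.2.degree = ((l + m : ℕ) : WithBot ℕ))
    · rw [if_pos hgz]
      exact fib_card hmonic hd hl hl1 z.1 z.2.2.1 z.2.2.2 hgz.1 hgz.2
    · rw [if_neg hgz]
      haveI := fib_empty hf hmonic hd hl hl1 z.1 z.2.2.1 z.2.2.2 hgz
      exact Nat.card_of_isEmpty
  rw [Finset.sum_congr rfl (fun z _ => e2 z), ← Finset.sum_filter, Finset.sum_const,
    smul_eq_mul, ← Fintype.card_subtype]
  -- card of the good subtype
  have e4 : Fintype.card {z : Fˣ × PB // IsCoprime z.2.1.1 z.2.1.2 ∧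
      (z.2.1.1.degree = ((l : ℕ) : WithBot ℕ) ∨ z.2.1.2.degree = ((l + m : ℕ) : WithBot ℕ))}
      = (Q - 1) * Nat.card (GoodPairs F l m) := by
    have E1 : {z : Fˣ × PB // IsCoprime z.2.1.1 z.2.1.2 ∧
        (z.2.1.1.degree = ((l : ℕ) : WithBot ℕ) ∨ z.2.1.2.degree = ((l + m : ℕ) : WithBot ℕ))}
        ≃ Fˣ × {p : PB // IsCoprime p.1.1 p.1.2 ∧
          (p.1.1.degree = ((l : ℕ) : WithBot ℕ) ∨ p.1.2.degree = ((l + m : ℕ) : WithBot ℕ))} :=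
      { toFun := fun z => (z.1.1, ⟨z.1.2, z.2⟩)
        invFun := fun x => ⟨(x.1, x.2.1), x.2.2⟩
        left_inv := fun z => rfl
        right_inv := fun x => rfl }
    have E2 : {p : PB // IsCoprime p.1.1 p.1.2 ∧
        (p.1.1.degree = ((l : ℕ) : WithBot ℕ) ∨ p.1.2.degree = ((l + m : ℕ) : WithBot ℕ))}
        ≃ GoodPairs F l m :=
      Equiv.subtypeSubtypeEquivSubtypeInter
        (fun p : F[X] × F[X] => p.1.degree ≤ ((l : ℕ) : WithBot ℕ) ∧
          p.2.degree ≤ ((l + m : ℕ) : WithBot ℕ))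
        (fun p : F[X] × F[X] => IsCoprime p.1 p.2 ∧
          (p.1.degree = ((l : ℕ) : WithBot ℕ) ∨ p.2.degree = ((l + m : ℕ) : WithBot ℕ)))
    rw [← Nat.card_eq_fintype_card,
      Nat.card_congr (E1.trans (Equiv.prodCongr (Equiv.refl Fˣ) E2)), Nat.card_prod,
      Nat.card_eq_fintype_card, Fintype.card_units, ← hQ]
  rw [e4]
  -- now the numerology
  have hGf := card_good (F := F) l m
  have hT1 := T_formula (F := F) l (l + m) (by omega)
  have hT2 := T_formula (F := F) l0 (l0 + m) (by omega)
  set B := Q ^ (2 * l0 + m + 1) with hB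
  have he1 : l0 + (l0 + m) + 1 = 2 * l0 + m + 1 := by omega
  have he2 : l0 + (l0 + m) + 2 = (2 * l0 + m + 1) + 1 := by omega
  have he3 : l + (l + m) + 1 = (2 * l0 + m + 1) + 2 := by omega
  have he4 : l + (l + m) + 2 = (2 * l0 + m + 1) + 3 := by omega
  rw [← hQ] at hT1 hT2
  rw [he1, he2, pow_add Q (2 * l0 + m + 1) 1, ← hB] at hT2
  rw [he3, he4, pow_add Q (2 * l0 + m + 1) 2, pow_add Q (2 * l0 + m + 1) 3, ← hB] at hT1
  have hcp2 : l0 + m + 1 = l + m := by omega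
  rw [show l0 + 1 = l from rfl, hcp2] at hT2
  -- hT2 : Nat.card (CP F l (l + m)) + (B + 1) = B * Q ^ 1 + Q
  -- hT1 : Nat.card (CP F (l+1) (l+m+1)) + (B * Q^2 + 1) = B * Q^3 + Q
  have key : (Q - 1) ^ 2 * (Q + 1) * B + (B * Q ^ 2 + B * Q ^ 1) = B * Q ^ 3 + B := by
    obtain ⟨s, hs⟩ : ∃ s, Q = s + 1 := ⟨Q - 1, by omega⟩
    rw [hs]
    simp only [Nat.add_sub_cancel]
    ring
  have hG : Nat.card (GoodPairs F l m) = (Q - 1) ^ 2 * (Q + 1) * B := by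
    generalize hx : (Q - 1) ^ 2 * (Q + 1) * B = X at key ⊢
    generalize h2' : B * Q ^ 2 = u at hT1 key
    generalize h3' : B * Q ^ 3 = w at hT1 key
    generalize h4' : B * Q ^ 1 = vv at hT2 key
    omega
  rw [hG, hB, hldef]
  ring
end

section
/- Let l ≥ 1 and n, m ≥ 0 be integers, let d = 2l + n + m, and let f ∈ 𝔽_q[t] be monic irreducible of degree d. Let α, γ ∈ 𝔽_q[t] be coprime polynomials with deg α ≤ l+n, deg γ ≤ l, and at least one of deg α = l+n or deg γ = l. Then the number of pairs (β, δ) ∈ 𝔽_q[t]² with deg β ≤ l+n+m, deg δ ≤ l+m, and αδ − βγ = λf for some λ ∈ 𝔽_q^×, equals q^{m+2} − q^{m+1}. -/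
open Polynomial

private lemma deg_mul_right_iff {F : Type} [Field F] {γ : F[X]} {a : ℕ}
    (hA : γ.degree = (a : ℕ)) (e : ℕ) (h : F[X]) :
    (γ * h).degree ≤ ((a + e : ℕ) : WithBot ℕ) ↔ h.degree ≤ (e : ℕ) := by
  have hγ0 : γ ≠ 0 := fun h0 => by simp [h0] at hA
  rcases eq_or_ne h 0 with rfl | hh0
  · simp
  · rw [← natDegree_le_iff_degree_le, ← natDegree_le_iff_degree_le,
      natDegree_mul hγ0 hh0, natDegree_eq_of_degree_eq_some hA]
    omega

private lemma cast_add_le_deg {F : Type} [Field F] {p h : F[X]} {a e : ℕ}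
    (hp : p.degree ≤ (a : ℕ)) (hh : h.degree ≤ (e : ℕ)) :
    (p * h).degree ≤ ((a + e : ℕ) : WithBot ℕ) := by
  refine le_trans (degree_mul_le _ _) ?_
  calc p.degree + h.degree ≤ ((a : ℕ) : WithBot ℕ) + ((e : ℕ) : WithBot ℕ) :=
        add_le_add hp hh
    _ = ((a + e : ℕ) : WithBot ℕ) := by rw [Nat.cast_add]

/-- Case where `α` has exact degree `a`. -/
private lemma hiff_left {F : Type} [Field F] {α γ β₀ δ₀ : F[X]} {a b m : ℕ}
    (hA : α.degree = (a : ℕ)) (hγ : γ.degree ≤ (b : ℕ))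
    (hβ₀ : β₀.degree ≤ ((a + m : ℕ) : WithBot ℕ))
    (hδ₀ : δ₀.degree ≤ ((b + m : ℕ) : WithBot ℕ))
    (c : F) (hc : c ≠ 0) (h : F[X]) :
    (C c * β₀ + α * h).degree ≤ ((a + m : ℕ) : WithBot ℕ) ∧
      (C c * δ₀ + γ * h).degree ≤ ((b + m : ℕ) : WithBot ℕ) ↔ h.degree ≤ (m : ℕ) := by
  constructor
  · rintro ⟨h1, -⟩
    rw [← deg_mul_right_iff hA m h]
    have e1 : α * h = (C c * β₀ + α * h) - C c * β₀ := by ring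
    rw [e1]
    refine le_trans (degree_sub_le _ _) (max_le h1 ?_)
    rw [degree_C_mul hc]; exact hβ₀
  · intro hm
    constructor
    · refine le_trans (degree_add_le _ _) (max_le ?_ ?_)
      · rw [degree_C_mul hc]; exact hβ₀
      · exact (deg_mul_right_iff hA m h).2 hm
    · refine le_trans (degree_add_le _ _) (max_le ?_ ?_)
      · rw [degree_C_mul hc]; exact hδ₀
      · exact cast_add_le_deg hγ hm

/-- Case where `γ` has exact degree `b`. -/
private lemma hiff_right {F : Type} [Field F] {α γ β₀ δ₀ : F[X]} {a b m : ℕ}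
    (hα : α.degree ≤ (a : ℕ)) (hB : γ.degree = (b : ℕ))
    (hβ₀ : β₀.degree ≤ ((a + m : ℕ) : WithBot ℕ))
    (hδ₀ : δ₀.degree ≤ ((b + m : ℕ) : WithBot ℕ))
    (c : F) (hc : c ≠ 0) (h : F[X]) :
    (C c * β₀ + α * h).degree ≤ ((a + m : ℕ) : WithBot ℕ) ∧
      (C c * δ₀ + γ * h).degree ≤ ((b + m : ℕ) : WithBot ℕ) ↔ h.degree ≤ (m : ℕ) := by
  constructor
  · rintro ⟨-, h2⟩
    rw [← deg_mul_right_iff hB m h]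
    have e1 : γ * h = (C c * δ₀ + γ * h) - C c * δ₀ := by ring
    rw [e1]
    refine le_trans (degree_sub_le _ _) (max_le h2 ?_)
    rw [degree_C_mul hc]; exact hδ₀
  · intro hm
    constructor
    · refine le_trans (degree_add_le _ _) (max_le ?_ ?_)
      · rw [degree_C_mul hc]; exact hβ₀
      · exact cast_add_le_deg hα hm
    · refine le_trans (degree_add_le _ _) (max_le ?_ ?_)
      · rw [degree_C_mul hc]; exact hδ₀
      · exact (deg_mul_right_iff hB m h).2 hm

private lemma deg_le_iff_lt_succ {F : Type} [Field F] (p : F[X]) (m : ℕ) :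
    p.degree ≤ (m : ℕ) ↔ p.degree < (((m + 1 : ℕ) : ℕ) : WithBot ℕ) := by
  rcases eq_or_ne p 0 with rfl | hp
  · simp [degree_zero, WithBot.bot_lt_iff_ne_bot]
  · rw [← natDegree_le_iff_degree_le, degree_eq_natDegree hp, Nat.cast_lt]
    omega

private lemma aux_count
    (F : Type) [Field F] [Fintype F] (q : ℕ) (hq : Fintype.card F = q)
    (m A B : ℕ) (f α γ β₀ δ₀ : F[X])
    (hf0 : f ≠ 0) (hα0 : α ≠ 0) (hcop : IsCoprime α γ)
    (heq : α * δ₀ - β₀ * γ = f)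
    (hiff : ∀ (c : F), c ≠ 0 → ∀ h : F[X],
      ((C c * β₀ + α * h).degree ≤ (A : ℕ) ∧ (C c * δ₀ + γ * h).degree ≤ (B : ℕ) ↔
        h.degree ≤ (m : ℕ))) :
    Nat.card {p : F[X] × F[X] //
        p.1.degree ≤ (A : ℕ) ∧ p.2.degree ≤ (B : ℕ) ∧
        ∃ lam : Fˣ, α * p.2 - p.1 * γ = C (lam : F) * f} = (q - 1) * q ^ (m + 1) := by
  classical
  let Φ : Fˣ × {h : F[X] // h.degree ≤ (m : ℕ)} → {p : F[X] × F[X] //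
      p.1.degree ≤ (A : ℕ) ∧ p.2.degree ≤ (B : ℕ) ∧
      ∃ lam : Fˣ, α * p.2 - p.1 * γ = C (lam : F) * f} := fun x =>
    ⟨(C (x.1 : F) * β₀ + α * x.2.1, C (x.1 : F) * δ₀ + γ * x.2.1), by
      refine ⟨((hiff _ (Units.ne_zero x.1) _).2 x.2.2).1,
        ((hiff _ (Units.ne_zero x.1) _).2 x.2.2).2, x.1, ?_⟩
      linear_combination (C (x.1 : F)) * heq⟩
  have hinj : Function.Injective Φ := by
    rintro ⟨c, h, hh⟩ ⟨c', h', hh'⟩ hxy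
    simp only [Φ, Subtype.mk.injEq, Prod.mk.injEq] at hxy
    obtain ⟨e1, e2⟩ := hxy
    have hcc : C (c : F) * f = C (c' : F) * f := by
      linear_combination (C ((c' : F)) - C ((c : F))) * heq + α * e2 - γ * e1
    have hc : c = c' := by
      have := mul_right_cancel₀ hf0 hcc
      exact Units.ext (C_injective this)
    subst hc
    have hh2 : h = h' := by
      have : α * h = α * h' := by linear_combination e1
      exact mul_left_cancel₀ hα0 this
    simp [hh2]
  have hsurj : Function.Surjective Φ := by
    rintro ⟨⟨β, δ⟩, hβ, hδ, lam, hlam⟩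
    have key : (β - C (lam : F) * β₀) * γ = α * (δ - C (lam : F) * δ₀) := by
      linear_combination (C (lam : F)) * heq - hlam
    obtain ⟨h, hh⟩ : α ∣ (β - C (lam : F) * β₀) :=
      hcop.dvd_of_dvd_mul_right ⟨_, key⟩
    have hβeq : β = C (lam : F) * β₀ + α * h := by linear_combination hh
    have hδeq : δ = C (lam : F) * δ₀ + γ * h := by
      have h2 : α * δ = α * (C (lam : F) * δ₀ + γ * h) := by
        linear_combination -key + γ * hh
      exact mul_left_cancel₀ hα0 h2
    have hm : h.degree ≤ (m : ℕ) := (hiff _ (Units.ne_zero lam) h).1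
      ⟨by rw [← hβeq]; exact hβ, by rw [← hδeq]; exact hδ⟩
    refine ⟨⟨lam, h, hm⟩, ?_⟩
    apply Subtype.ext
    exact Prod.ext hβeq.symm hδeq.symm
  have e := Equiv.ofBijective Φ ⟨hinj, hsurj⟩
  rw [← Nat.card_congr e, Nat.card_prod]
  have c1 : Nat.card Fˣ = q - 1 := by
    rw [Nat.card_eq_fintype_card, Fintype.card_units, hq]
  have e2 : {h : F[X] // h.degree ≤ (m : ℕ)} ≃ (Fin (m + 1) → F) :=
    (Equiv.subtypeEquivRight fun p => by
      rw [mem_degreeLT]; exact deg_le_iff_lt_succ p m).trans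
      (degreeLTEquiv F (m + 1)).toEquiv
  have c2 : Nat.card {h : F[X] // h.degree ≤ (m : ℕ)} = q ^ (m + 1) := by
    rw [Nat.card_congr e2, Nat.card_eq_fintype_card, Fintype.card_fun, hq, Fintype.card_fin]
  rw [c1, c2]

/-- Let `d = 2l + n + m` with `l ≥ 1` and let `f` be monic irreducible of degree `d`.
For coprime `α, γ` with `deg α ≤ l+n`, `deg γ ≤ l` and `deg α = l+n` or `deg γ = l`,
the number of pairs `(β, δ)` with `deg β ≤ l+n+m`, `deg δ ≤ l+m` and
`αδ − βγ = λf` for some unit `λ` equals `q^(m+2) − q^(m+1)`. -/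
theorem card_pairs_beta_delta
    (F : Type) [Field F] [Fintype F] (q : ℕ) (hq : Fintype.card F = q)
    (l n m : ℕ) (hl : 1 ≤ l) (d : ℕ) (hd : d = 2 * l + n + m)
    (f : F[X]) (hf : Irreducible f) (hmonic : f.Monic) (hdf : f.natDegree = d)
    (α γ : F[X]) (hcop : IsCoprime α γ)
    (hα : α.degree ≤ (l + n : ℕ)) (hγ : γ.degree ≤ (l : ℕ))
    (hmax : α.degree = (l + n : ℕ) ∨ γ.degree = (l : ℕ)) :
    Nat.card {p : F[X] × F[X] //
        p.1.degree ≤ (l + n + m : ℕ) ∧ p.2.degree ≤ (l + m : ℕ) ∧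
        ∃ lam : Fˣ, α * p.2 - p.1 * γ = C (lam : F) * f} =
      q ^ (m + 2) - q ^ (m + 1) := by
  have hf0 : f ≠ 0 := hf.ne_zero
  have hfd : f.degree = (d : ℕ) := by rw [degree_eq_natDegree hf0, hdf]
  have hα0 : α ≠ 0 := by
    rintro rfl
    rcases hmax with h | h
    · rw [degree_zero] at h; exact absurd h.symm (by simp)
    · have hu : IsUnit γ := isCoprime_zero_left.1 hcop
      rw [isUnit_iff_degree_eq_zero.1 hu] at h
      have : l = 0 := by exact_mod_cast h.symm
      omega
  have hγ0 : γ ≠ 0 := by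
    rintro rfl
    rcases hmax with h | h
    · have hu : IsUnit α := isCoprime_zero_right.1 hcop
      rw [isUnit_iff_degree_eq_zero.1 hu] at h
      have : l + n = 0 := by exact_mod_cast h.symm
      omega
    · rw [degree_zero] at h; exact absurd h.symm (by simp)
  obtain ⟨a, b, hab⟩ := id hcop
  have harith : (q - 1) * q ^ (m + 1) = q ^ (m + 2) - q ^ (m + 1) := by
    rw [Nat.sub_one_mul, ← pow_succ']
  rw [← harith]
  rcases hmax with hA | hB
  · -- deg α = l + n exactly
    set h₀ : F[X] := (-(b * f)) / α with hh₀
    set β₀ : F[X] := (-(b * f)) % α with hβ₀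
    set δ₀ : F[X] := a * f - γ * h₀ with hδ₀
    have hmod := EuclideanDomain.div_add_mod (-(b * f)) α
    have heq : α * δ₀ - β₀ * γ = f := by
      rw [hδ₀, hβ₀, hh₀]
      linear_combination f * hab - γ * hmod
    have hβ₀deg : β₀.degree ≤ ((l + n + m : ℕ) : WithBot ℕ) := by
      have h1 : β₀.degree < α.degree := EuclideanDomain.mod_lt _ hα0
      rw [hA] at h1
      refine le_trans (le_of_lt h1) ?_
      exact_mod_cast Nat.le_add_right (l + n) m
    have hδ₀deg : δ₀.degree ≤ ((l + m : ℕ) : WithBot ℕ) := by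
      have hαA : α.degree = ((l + n : ℕ) : WithBot ℕ) := hA
      refine (deg_mul_right_iff hαA (l + m) δ₀).1 ?_
      have e1 : α * δ₀ = f + β₀ * γ := by linear_combination heq
      rw [e1]
      refine le_trans (degree_add_le _ _) (max_le ?_ ?_)
      · rw [hfd]; exact_mod_cast le_of_eq (by omega)
      · refine le_trans (cast_add_le_deg hβ₀deg hγ) ?_
        exact_mod_cast le_of_eq (by omega)
    have := aux_count F q hq m (l + n + m) (l + m) f α γ β₀ δ₀ hf0 hα0 hcop heq
      (fun c hc h => by
        have := hiff_left (a := l + n) (b := l) (m := m) hA hγ hβ₀deg hδ₀deg c hc h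
        convert this using 3 <;> omega)
    convert this using 3
  · -- deg γ = l exactly
    set h₀ : F[X] := (a * f) / γ with hh₀
    set δ₀ : F[X] := (a * f) % γ with hδ₀
    set β₀ : F[X] := -(b * f) - α * h₀ with hβ₀
    have hmod := EuclideanDomain.div_add_mod (a * f) γ
    have heq : α * δ₀ - β₀ * γ = f := by
      rw [hδ₀, hβ₀, hh₀]
      linear_combination f * hab + α * hmod
    have hδ₀deg : δ₀.degree ≤ ((l + m : ℕ) : WithBot ℕ) := by
      have h1 : δ₀.degree < γ.degree := EuclideanDomain.mod_lt _ hγ0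
      rw [hB] at h1
      refine le_trans (le_of_lt h1) ?_
      exact_mod_cast Nat.le_add_right l m
    have hβ₀deg : β₀.degree ≤ ((l + n + m : ℕ) : WithBot ℕ) := by
      refine (deg_mul_right_iff hB (l + n + m) β₀).1 ?_
      have e1 : γ * β₀ = α * δ₀ - f := by linear_combination -heq
      rw [e1]
      refine le_trans (degree_sub_le _ _) (max_le ?_ ?_)
      · refine le_trans (cast_add_le_deg hα hδ₀deg) ?_
        exact_mod_cast le_of_eq (by omega)
      · rw [hfd]; exact_mod_cast le_of_eq (by omega)
    have := aux_count F q hq m (l + n + m) (l + m) f α γ β₀ δ₀ hf0 hα0 hcop heq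
      (fun c hc h => by
        have := hiff_right (a := l + n) (b := l) (m := m) hα hB hβ₀deg hδ₀deg c hc h
        convert this using 3 <;> omega)
    convert this using 3
end

section
/- Let n ≤ m be natural numbers with m + n < d and d − m − n even, and set l := (d − m − n)/2. If M ∈ Υ_{n,m}, h₁ ∈ H_n, and h₂ ∈ H_m, then h₁·M·h₂ ∈ Υ_{n,m}; that is, Υ_{n,m} is stable under left multiplication by H_n and right multiplication by H_m. -/
open Polynomial

/-- `Υ_{n,m}`: matrices `(α β; γ δ)` over `𝔽_q[t]` with `deg α ≤ l+n`, `deg β ≤ l+n+m`,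
`deg γ ≤ l`, `deg δ ≤ l+m`, and `αδ − βγ = λf` for some unit `λ`. -/
def Upsilon (F : Type) [Field F] (f : F[X]) (l n m : ℕ) :
    Set (Matrix (Fin 2) (Fin 2) F[X]) :=
  {M | (M 0 0).degree ≤ (l + n : ℕ) ∧ (M 0 1).degree ≤ (l + n + m : ℕ) ∧
    (M 1 0).degree ≤ (l : ℕ) ∧ (M 1 1).degree ≤ (l + m : ℕ) ∧
    ∃ lam : Fˣ, M 0 0 * M 1 1 - M 0 1 * M 1 0 = Polynomial.C (lam : F) * f}

lemma Upsilon.degree_mul_add_mul_le {F : Type} [Field F] {p q r s : F[X]}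
    {a b c d e : WithBot ℕ}
    (hp : p.degree ≤ a) (hq : q.degree ≤ b) (hr : r.degree ≤ c) (hs : s.degree ≤ d)
    (h1 : a + b ≤ e) (h2 : c + d ≤ e) : (p * q + r * s).degree ≤ e := by
  refine le_trans (degree_add_le _ _) (max_le ?_ ?_)
  · exact le_trans (degree_mul_le _ _) (le_trans (add_le_add hp hq) h1)
  · exact le_trans (degree_mul_le _ _) (le_trans (add_le_add hr hs) h2)

lemma Upsilon.shift_le {x : WithBot ℕ} {n l : ℕ} (h : x + (n : WithBot ℕ) ≤ 0) :
    x + ((l + n : ℕ) : WithBot ℕ) ≤ (l : ℕ) := by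
  have : x + ((l + n : ℕ) : WithBot ℕ) = (x + n) + l := by push_cast; abel
  rw [this]
  calc (x + n) + (l : WithBot ℕ) ≤ 0 + l := add_le_add_left h _
    _ = l := zero_add _

/-- The key properties of elements of `Hset F i`. -/
lemma Hset.conditions {F : Type} [Field F] {i : ℕ} {h : Matrix (Fin 2) (Fin 2) F[X]}
    (hh : h ∈ Hset F i) :
    (h 0 0).degree ≤ 0 ∧ (h 0 1).degree ≤ (i : ℕ) ∧
      (h 1 0).degree + (i : WithBot ℕ) ≤ 0 ∧ (h 1 1).degree ≤ 0 ∧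
      ∃ u : Fˣ, h.det = Polynomial.C (u : F) := by
  unfold Hset at hh
  split_ifs at hh with hi
  · obtain ⟨N, hN, rfl⟩ := hh
    subst hi
    refine ⟨?_, ?_, ?_, ?_, hN.unit, ?_⟩
    · simpa [Matrix.map_apply] using degree_C_le
    · simpa [Matrix.map_apply] using degree_C_le
    · simpa [Matrix.map_apply] using degree_C_le
    · simpa [Matrix.map_apply] using degree_C_le
    · rw [show N.map ⇑C = (C : F →+* F[X]).mapMatrix N from rfl, ← RingHom.map_det,
        hN.unit_spec]
  · obtain ⟨a, e, b, hb, rfl⟩ := hh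
    refine ⟨?_, ?_, ?_, ?_, a * e, ?_⟩
    · simpa using degree_C_le
    · simpa using hb
    · have : (!![Polynomial.C (a : F), b; 0, Polynomial.C (e : F)]) 1 0 = 0 := by
        simp [Matrix.cons_val_one, Matrix.head_cons]
      rw [this, degree_zero, WithBot.bot_add]
      exact bot_le
    · simpa using degree_C_le
    · rw [Matrix.det_fin_two_of, mul_zero, sub_zero, ← C_mul, Units.val_mul]

lemma Upsilon.left_mul_mem {F : Type} [Field F] {f : F[X]} {l n m : ℕ}
    {M h : Matrix (Fin 2) (Fin 2) F[X]}
    (hM : M ∈ Upsilon F f l n m)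
    (h00 : (h 0 0).degree ≤ 0) (h01 : (h 0 1).degree ≤ (n : ℕ))
    (h10 : (h 1 0).degree + (n : WithBot ℕ) ≤ 0) (h11 : (h 1 1).degree ≤ 0)
    (hu : ∃ u : Fˣ, h.det = Polynomial.C (u : F)) :
    h * M ∈ Upsilon F f l n m := by
  obtain ⟨d00, d01, d10, d11, lam, hdet⟩ := hM
  obtain ⟨u, hu⟩ := hu
  have e : ∀ i j, (h * M) i j = h i 0 * M 0 j + h i 1 * M 1 j := by
    intro i j; simp [Matrix.mul_apply, Fin.sum_univ_two]
  refine ⟨?_, ?_, ?_, ?_, u * lam, ?_⟩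
  · rw [e]
    exact Upsilon.degree_mul_add_mul_le h00 d00 h01 d10 (by simp)
      (by norm_cast; try omega)
  · rw [e]
    exact Upsilon.degree_mul_add_mul_le h00 d01 h01 d11 (by simp)
      (by norm_cast; try omega)
  · rw [e]
    refine Upsilon.degree_mul_add_mul_le le_rfl d00 h11 d10 ?_ (by simp)
    exact Upsilon.shift_le h10
  · rw [e]
    refine Upsilon.degree_mul_add_mul_le le_rfl d01 h11 d11 ?_ (by simp)
    have : ((l + n + m : ℕ) : WithBot ℕ) = ((l + m : ℕ) : WithBot ℕ) + (n : ℕ) := by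
      push_cast; abel
    rw [this, ← add_assoc]
    calc (h 1 0).degree + ((l + m : ℕ) : WithBot ℕ) + (n : ℕ)
        = ((h 1 0).degree + (n : ℕ)) + ((l + m : ℕ) : WithBot ℕ) := by abel
      _ ≤ 0 + ((l + m : ℕ) : WithBot ℕ) := add_le_add_left h10 _
      _ = ((l + m : ℕ) : WithBot ℕ) := zero_add _
  · have : (h * M) 0 0 * (h * M) 1 1 - (h * M) 0 1 * (h * M) 1 0 = (h * M).det := by
      rw [Matrix.det_fin_two]
    rw [this, Matrix.det_mul, hu, Matrix.det_fin_two, hdet, Units.val_mul, C_mul]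
    ring

lemma Upsilon.right_mul_mem {F : Type} [Field F] {f : F[X]} {l n m : ℕ}
    {M h : Matrix (Fin 2) (Fin 2) F[X]}
    (hM : M ∈ Upsilon F f l n m)
    (h00 : (h 0 0).degree ≤ 0) (h01 : (h 0 1).degree ≤ (m : ℕ))
    (h10 : (h 1 0).degree + (m : WithBot ℕ) ≤ 0) (h11 : (h 1 1).degree ≤ 0)
    (hu : ∃ u : Fˣ, h.det = Polynomial.C (u : F)) :
    M * h ∈ Upsilon F f l n m := by
  obtain ⟨d00, d01, d10, d11, lam, hdet⟩ := hM
  obtain ⟨u, hu⟩ := hu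
  have e : ∀ i j, (M * h) i j = M i 0 * h 0 j + M i 1 * h 1 j := by
    intro i j; simp [Matrix.mul_apply, Fin.sum_univ_two]
  refine ⟨?_, ?_, ?_, ?_, lam * u, ?_⟩
  · rw [e]
    refine Upsilon.degree_mul_add_mul_le d00 h00 d01 le_rfl (by simp) ?_
    have : ((l + n + m : ℕ) : WithBot ℕ) + (h 1 0).degree
        = ((h 1 0).degree + (m : ℕ)) + ((l + n : ℕ) : WithBot ℕ) := by push_cast; abel
    rw [this]
    calc ((h 1 0).degree + (m : ℕ)) + ((l + n : ℕ) : WithBot ℕ)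
        ≤ 0 + ((l + n : ℕ) : WithBot ℕ) := add_le_add_left h10 _
      _ = _ := zero_add _
  · rw [e]
    exact Upsilon.degree_mul_add_mul_le d00 h01 d01 h11 (by norm_cast; try omega)
      (by simp)
  · rw [e]
    refine Upsilon.degree_mul_add_mul_le d10 h00 d11 le_rfl (by simp) ?_
    have : ((l + m : ℕ) : WithBot ℕ) + (h 1 0).degree
        = ((h 1 0).degree + (m : ℕ)) + ((l : ℕ) : WithBot ℕ) := by push_cast; abel
    rw [this]
    calc ((h 1 0).degree + (m : ℕ)) + ((l : ℕ) : WithBot ℕ)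
        ≤ 0 + ((l : ℕ) : WithBot ℕ) := add_le_add_left h10 _
      _ = _ := zero_add _
  · rw [e]
    exact Upsilon.degree_mul_add_mul_le d10 h01 d11 h11 (by norm_cast; try omega)
      (by simp)
  · have : (M * h) 0 0 * (M * h) 1 1 - (M * h) 0 1 * (M * h) 1 0 = (M * h).det := by
      rw [Matrix.det_fin_two]
    rw [this, Matrix.det_mul, hu, Matrix.det_fin_two, hdet, Units.val_mul, C_mul]
    ring

/-- `Υ_{n,m}` is stable under left multiplication by `H_n` and right multiplication
by `H_m`. -/
theorem Upsilon_stable_under_double_cosets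
    (F : Type) [Field F] [Fintype F]
    (f : F[X]) (hf : Irreducible f) (hmonic : f.Monic)
    (d n m l : ℕ) (hd : f.natDegree = d) (hnm : n ≤ m)
    (hl : d = 2 * l + n + m) (hl1 : 1 ≤ l)
    (M h₁ h₂ : Matrix (Fin 2) (Fin 2) F[X])
    (hM : M ∈ Upsilon F f l n m) (hh₁ : h₁ ∈ Hset F n) (hh₂ : h₂ ∈ Hset F m) :
    h₁ * M * h₂ ∈ Upsilon F f l n m := by
  obtain ⟨a00, a01, a10, a11, au⟩ := Hset.conditions hh₁
  obtain ⟨b00, b01, b10, b11, bu⟩ := Hset.conditions hh₂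
  exact Upsilon.right_mul_mem
    (Upsilon.left_mul_mem hM a00 a01 a10 a11 au) b00 b01 b10 b11 bu
end

section
/- Let 1 ≤ n ≤ m be natural numbers with m + n < d and d − m − n even, and set l := (d − m − n)/2. Let M ∈ Υ_{n,m}. If h₁ ∈ H_n and h₂ ∈ H_m satisfy h₁·M·h₂ = M, then there exists c ∈ 𝔽_q^× with h₁ = c·I and h₂ = c^{−1}·I. Consequently the double coset H_n·M·H_m contains exactly |H_n|·|H_m|/(q−1) matrices. -/
open Polynomial

private lemma degleC {F : Type} [Field F] (c : F) {p : F[X]} {i : ℕ}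
    (hp : p.degree ≤ (i : ℕ)) : (C c * p).degree ≤ (i : WithBot ℕ) := by
  refine (degree_mul_le _ p).trans ?_
  calc (C c).degree + p.degree ≤ 0 + (i : WithBot ℕ) := add_le_add degree_C_le hp
  _ = i := zero_add _

private lemma Hset_mem_iff {F : Type} [Field F] {i : ℕ} (hi : i ≠ 0)
    (h : Matrix (Fin 2) (Fin 2) F[X]) :
    h ∈ Hset F i ↔ ∃ (a e : Fˣ) (b : F[X]), b.degree ≤ (i:ℕ) ∧
      h = !![C (a:F), b; 0, C (e:F)] := by
  rw [Hset, if_neg hi]; rfl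

private lemma Hset_mul {F : Type} [Field F] {i : ℕ} (hi : i ≠ 0)
    {g h : Matrix (Fin 2) (Fin 2) F[X]} (hg : g ∈ Hset F i) (hh : h ∈ Hset F i) :
    g * h ∈ Hset F i := by
  rw [Hset_mem_iff hi] at hg hh ⊢
  obtain ⟨a, e, b, hb, rfl⟩ := hg
  obtain ⟨a', e', b', hb', rfl⟩ := hh
  refine ⟨a * a', e * e', C (a:F) * b' + b * C (e':F), ?_, ?_⟩
  · refine (degree_add_le _ _).trans (max_le (degleC _ hb') ?_)
    rw [mul_comm]; exact degleC _ hb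
  · ext i j
    fin_cases i <;> fin_cases j <;>
      simp [Matrix.mul_apply, Fin.sum_univ_two, map_mul] <;> ring

private lemma Hset_smul {F : Type} [Field F] {i : ℕ} (hi : i ≠ 0)
    {g : Matrix (Fin 2) (Fin 2) F[X]} (hg : g ∈ Hset F i) (u : Fˣ) :
    (C (u:F)) • g ∈ Hset F i := by
  rw [Hset_mem_iff hi] at hg ⊢
  obtain ⟨a, e, b, hb, rfl⟩ := hg
  refine ⟨u * a, u * e, C (u:F) * b, degleC _ hb, ?_⟩
  ext i j
  fin_cases i <;> fin_cases j <;>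
    simp [Matrix.smul_apply, smul_eq_mul, map_mul]

private lemma Hset_inv {F : Type} [Field F] {i : ℕ} (hi : i ≠ 0)
    {g : Matrix (Fin 2) (Fin 2) F[X]} (hg : g ∈ Hset F i) :
    ∃ g' ∈ Hset F i, g' * g = 1 ∧ g * g' = 1 := by
  rw [Hset_mem_iff hi] at hg
  obtain ⟨a, e, b, hb, rfl⟩ := hg
  have hA : C (((a:F))⁻¹) * C ((a:F)) = 1 := by
    rw [← map_mul, inv_mul_cancel₀ a.ne_zero, map_one]
  have hE : C (((e:F))⁻¹) * C ((e:F)) = 1 := by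
    rw [← map_mul, inv_mul_cancel₀ e.ne_zero, map_one]
  have hA' : C ((a:F)) * C (((a:F))⁻¹) = 1 := by
    rw [← map_mul, mul_inv_cancel₀ a.ne_zero, map_one]
  have hE' : C ((e:F)) * C (((e:F))⁻¹) = 1 := by
    rw [← map_mul, mul_inv_cancel₀ e.ne_zero, map_one]
  refine ⟨!![C (((a:F))⁻¹), -(C (((a:F))⁻¹) * b * C (((e:F))⁻¹)); 0,
      C (((e:F))⁻¹)], ?_, ?_, ?_⟩
  · rw [Hset_mem_iff hi]
    refine ⟨a⁻¹, e⁻¹, -(C (((a:F))⁻¹) * b * C (((e:F))⁻¹)), ?_, by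
      simp [Units.val_inv_eq_inv_val]⟩
    rw [degree_neg, mul_comm]
    exact degleC _ (degleC _ hb)
  · refine Matrix.ext fun i j => ?_
    fin_cases i <;> fin_cases j <;>
      simp [Matrix.mul_apply, Fin.sum_univ_two, Matrix.one_apply]
    · linear_combination hA
    · linear_combination (-(C (((a:F))⁻¹) * b)) * hE
    · linear_combination hE
  · refine Matrix.ext fun i j => ?_
    fin_cases i <;> fin_cases j <;>
      simp [Matrix.mul_apply, Fin.sum_univ_two, Matrix.one_apply]
    · linear_combination hA'
    · linear_combination (-(b * C (((e:F))⁻¹))) * hA'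
    · linear_combination hE'

private lemma Hset_coeff {F : Type} [Field F] {i : ℕ} (hi : i ≠ 0)
    {g : Matrix (Fin 2) (Fin 2) F[X]} (hg : g ∈ Hset F i) :
    (g 0 0).coeff 0 ≠ 0 := by
  rw [Hset_mem_iff hi] at hg
  obtain ⟨a, e, b, hb, rfl⟩ := hg
  simp


private lemma degleC' {F : Type} [Field F] (c : F) {p : F[X]} {i : ℕ}
    (hp : p.degree ≤ (i : ℕ)) : (C c * p).degree ≤ (i : WithBot ℕ) := by
  refine (degree_mul_le _ p).trans ?_
  calc (C c).degree + p.degree ≤ 0 + (i : WithBot ℕ) := add_le_add degree_C_le hp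
  _ = i := zero_add _

private lemma degle' {F : Type} [Field F] {p q : F[X]} {i j : ℕ}
    (hp : p.degree ≤ (i:ℕ)) (hq : q.degree ≤ (j:ℕ)) :
    (p * q).degree ≤ ((i + j : ℕ) : WithBot ℕ) := by
  refine (degree_mul_le p q).trans ?_
  rw [Nat.cast_add]; exact add_le_add hp hq

private lemma no_factor' {F : Type} [Field F] {f : F[X]} (hf : Irreducible f) {p s : F[X]} {c : F}
    (hc : c ≠ 0) (h : p * s = C c * f) (hp : p.degree < f.degree)
    (hs : s.degree < f.degree) : False := by
  have hf0 : f ≠ 0 := hf.ne_zero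
  have hps : p * s ≠ 0 := by
    rw [h]; exact mul_ne_zero (by simpa using hc) hf0
  have hdvd : f ∣ p * s := ⟨C c, by rw [h, mul_comm]⟩
  rcases hf.prime.2.2 p s hdvd with hd | hd
  · exact absurd (Polynomial.degree_le_of_dvd hd (left_ne_zero_of_mul hps)) (not_le.2 hp)
  · exact absurd (Polynomial.degree_le_of_dvd hd (right_ne_zero_of_mul hps)) (not_le.2 hs)

private lemma stab {F : Type} [Field F]
    {f : F[X]} (hf : Irreducible f) (hmonic : f.Monic)
    {d n m l : ℕ} (hd : f.natDegree = d) (hn1 : 1 ≤ n) (hnm : n ≤ m)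
    (hl : d = 2 * l + n + m) (hl1 : 1 ≤ l)
    {M : Matrix (Fin 2) (Fin 2) F[X]} (hM : M ∈ Upsilon F f l n m)
    (a e a' e' : Fˣ) (b b' : F[X]) (hb : b.degree ≤ (n : ℕ)) (hb' : b'.degree ≤ (m : ℕ))
    (heq : !![C (a:F), b; 0, C (e:F)] * M * !![C (a':F), b'; 0, C (e':F)] = M) :
    (a : F) = e ∧ b = 0 ∧ b' = 0 ∧ (a' : F) = (a : F)⁻¹ ∧ (e' : F) = (a : F)⁻¹ := by
  obtain ⟨dα, dβ, dγ, dδ, lam, hdet⟩ := hM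
  have hfd : f.degree = ((d : ℕ) : WithBot ℕ) := by
    rw [Polynomial.degree_eq_natDegree hmonic.ne_zero, hd]
  have hcast : ∀ i : ℕ, i < d → ((i : ℕ) : WithBot ℕ) < f.degree := by
    intro i hi; rw [hfd]; exact_mod_cast hi
  -- nonvanishing of entries
  have hγ : M 1 0 ≠ 0 := by
    intro h0
    have hh : M 0 0 * M 1 1 = C ((lam : F)) * f := by
      rw [← hdet, h0]; ring
    exact no_factor' hf lam.ne_zero hh
      (lt_of_le_of_lt dα (hcast _ (by omega)))
      (lt_of_le_of_lt dδ (hcast _ (by omega)))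
  have hα : M 0 0 ≠ 0 := by
    intro h0
    have hh : (-(M 0 1)) * M 1 0 = C ((lam : F)) * f := by
      rw [← hdet, h0]; ring
    refine no_factor' hf lam.ne_zero hh ?_ (lt_of_le_of_lt dγ (hcast _ (by omega)))
    rw [degree_neg]
    exact lt_of_le_of_lt dβ (hcast _ (by omega))
  -- the four entry equations
  have E10 := congrFun (congrFun heq 1) 0
  have E00 := congrFun (congrFun heq 0) 0
  have E01 := congrFun (congrFun heq 0) 1
  have E11 := congrFun (congrFun heq 1) 1
  simp only [Matrix.mul_apply, Matrix.vecMul, dotProduct, Fin.sum_univ_two,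
    Matrix.cons_val', Matrix.cons_val_zero, Matrix.cons_val_one, Matrix.head_cons,
    Matrix.head_fin_const, Matrix.empty_val', Matrix.cons_val_fin_one, Matrix.of_apply,
    zero_mul, mul_zero, add_zero, zero_add] at E10 E00 E01 E11
  -- e * a' = 1
  have ea' : (e : F) * a' = 1 := by
    have h1 : (C ((e:F) * (a':F)) - 1) * M 1 0 = 0 := by
      rw [map_mul]; linear_combination E10
    rcases mul_eq_zero.mp h1 with h | h
    · have h2 : C ((e:F) * (a':F)) = C 1 := by rw [map_one]; exact sub_eq_zero.mp h
      exact_mod_cast Polynomial.C_injective h2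
    · exact absurd h hγ
  have E00' : C ((a:F) * (a':F) - 1) * M 0 0 = -(C ((a':F)) * b * M 1 0) := by
    rw [map_sub, map_mul, map_one]; linear_combination E00
  have ha'0 : (a' : F) ≠ 0 := a'.ne_zero
  by_cases hae : (a : F) = (e : F)
  · -- main case : a = e
    have haa' : (a:F) * (a':F) - 1 = 0 := by rw [hae, ea', sub_self]
    have b0 : b = 0 := by
      have h1 : C ((a':F)) * b * M 1 0 = 0 := by
        have := E00'
        rw [haa', map_zero, zero_mul] at this
        linear_combination this
      rcases mul_eq_zero.mp h1 with h | h
      · rcases mul_eq_zero.mp h with h2 | h2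
        · exact absurd h2 (by simpa using ha'0)
        · exact h2
      · exact absurd h hγ
    subst b0
    -- E01 : C a * M 0 0 * b' + C a * C e' * M 0 1 = M 0 1  (with b = 0)
    -- E11 : C e * M 1 0 * b' + C e * C e' * M 1 1 = M 1 1
    have hCae : (C ((a:F)) : F[X]) = C ((e:F)) := by rw [hae]
    have E01' : C ((a:F)) * M 0 0 * b' = (1 - C ((a:F) * (e':F))) * M 0 1 := by
      rw [map_mul]; linear_combination E01
    have E11' : C ((a:F)) * M 1 0 * b' = (1 - C ((a:F) * (e':F))) * M 1 1 := by
      rw [map_mul]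
      linear_combination E11 + (M 1 0 * b' + C ((e':F)) * M 1 1) * hCae
    by_cases hae' : (a:F) * (e':F) = 1
    · have b'0 : b' = 0 := by
        have h1 : C ((a:F)) * M 0 0 * b' = 0 := by
          rw [E01', hae', map_one, sub_self, zero_mul]
        rcases mul_eq_zero.mp h1 with h | h
        · rcases mul_eq_zero.mp h with h2 | h2
          · exact absurd h2 (by simpa using a.ne_zero)
          · exact absurd h2 hα
        · exact h
      refine ⟨hae, rfl, b'0, ?_, ?_⟩
      · rw [← hae] at ea'
        field_simp at ea' ⊢
        linear_combination ea'
      · field_simp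
        linear_combination hae'
    · exfalso
      have hw : (1 : F) - (a:F) * (e':F) ≠ 0 := sub_ne_zero.mpr (Ne.symm hae')
      have hz : ((1:F[X]) - C ((a:F)*(e':F))) * (C ((lam:F)) * f) = 0 := by
        linear_combination (-(M 0 0)) * E11' + M 1 0 * E01' -
          (1 - C ((a:F) * (e':F))) * hdet
      have hX : (1 : F[X]) - C ((a:F)*(e':F)) ≠ 0 := by
        intro h
        apply hw
        have h2 : C ((1:F) - (a:F)*(e':F)) = 0 := by rw [map_sub, map_one]; exact h
        exact Polynomial.C_eq_zero.mp h2
      exact mul_ne_zero hX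
        (mul_ne_zero (by simpa using lam.ne_zero) hf.ne_zero) hz
  · -- contradiction case : a ≠ e
    exfalso
    have hu : (a:F) * (a':F) - 1 ≠ 0 := by
      intro h
      apply hae
      have h1 : (a:F) * (a':F) = 1 := sub_eq_zero.mp h
      exact mul_right_cancel₀ ha'0 (h1.trans ea'.symm)
    have key : M 1 0 * ((-(C ((a':F)) * b)) * M 1 1 - C ((a:F) * (a':F) - 1) * M 0 1) =
        C (((a:F) * (a':F) - 1) * (lam:F)) * f := by
      rw [map_mul]
      linear_combination (-(M 1 1)) * E00' + C ((a:F) * (a':F) - 1) * hdet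
    refine no_factor' hf (mul_ne_zero hu lam.ne_zero) key
      (lt_of_le_of_lt dγ (hcast _ (by omega))) ?_
    refine lt_of_le_of_lt (degree_sub_le _ _) (max_lt ?_ ?_)
    · refine lt_of_le_of_lt ?_ (hcast (n + (l + m)) (by omega))
      have h1 : (-(C ((a':F)) * b)).degree ≤ (n : ℕ) := by
        rw [degree_neg]; exact degleC' _ hb
      exact degle' h1 dδ
    · exact lt_of_le_of_lt (degleC' _ dβ) (hcast _ (by omega))


/-- For `1 ≤ n ≤ m`, `m + n < d`, `d − m − n = 2l` even and `M ∈ Υ_{n,m}`: if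
`h₁ M h₂ = M` with `h₁ ∈ H_n`, `h₂ ∈ H_m`, then `h₁ = c·I` and `h₂ = c⁻¹·I` for some
scalar `c ∈ 𝔽_q^×`; consequently the double coset `H_n · M · H_m` has exactly
`|H_n| · |H_m| / (q−1)` elements. -/
theorem double_coset_of_Upsilon_elt_card
    (F : Type) [Field F] [Fintype F] (q : ℕ) (hq : Fintype.card F = q)
    (f : F[X]) (hf : Irreducible f) (hmonic : f.Monic)
    (d n m l : ℕ) (hd : f.natDegree = d) (hn1 : 1 ≤ n) (hnm : n ≤ m)
    (hl : d = 2 * l + n + m) (hl1 : 1 ≤ l)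
    (M : Matrix (Fin 2) (Fin 2) F[X]) (hM : M ∈ Upsilon F f l n m) :
    (∀ h₁ ∈ Hset F n, ∀ h₂ ∈ Hset F m, h₁ * M * h₂ = M →
      ∃ c : Fˣ, h₁ = Polynomial.C ((c : F)) • (1 : Matrix (Fin 2) (Fin 2) F[X]) ∧
        h₂ = Polynomial.C (((c⁻¹ : Fˣ) : F)) • (1 : Matrix (Fin 2) (Fin 2) F[X])) ∧
    Nat.card {N : Matrix (Fin 2) (Fin 2) F[X] |
        ∃ h₁ ∈ Hset F n, ∃ h₂ ∈ Hset F m, N = h₁ * M * h₂} =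
      Nat.card (Hset F n) * Nat.card (Hset F m) / (q - 1) := by
  have hn0 : n ≠ 0 := by omega
  have hm0 : m ≠ 0 := by omega
  have key : ∀ h₁ ∈ Hset F n, ∀ h₂ ∈ Hset F m, h₁ * M * h₂ = M →
      ∃ c : Fˣ, h₁ = Polynomial.C ((c : F)) • (1 : Matrix (Fin 2) (Fin 2) F[X]) ∧
        h₂ = Polynomial.C (((c⁻¹ : Fˣ) : F)) • (1 : Matrix (Fin 2) (Fin 2) F[X]) := by
    intro h₁ hh₁ h₂ hh₂ heq
    rw [Hset_mem_iff hn0] at hh₁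
    obtain ⟨a, e, b, hb, rfl⟩ := hh₁
    rw [Hset_mem_iff hm0] at hh₂
    obtain ⟨a', e', b', hb', rfl⟩ := hh₂
    obtain ⟨hae, hb0, hb'0, ha', he'⟩ :=
      stab hf hmonic hd hn1 hnm hl hl1 hM a e a' e' b b' hb hb' heq
    subst hb0; subst hb'0
    refine ⟨a, ?_, ?_⟩
    · refine Matrix.ext fun i j => ?_
      fin_cases i <;> fin_cases j <;>
        simp [Matrix.one_apply, smul_eq_mul, ← hae]
    · refine Matrix.ext fun i j => ?_
      fin_cases i <;> fin_cases j <;>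
        simp [Matrix.one_apply, smul_eq_mul, Units.val_inv_eq_inv_val, ha', he']
  refine ⟨key, ?_⟩
  -- part 2
  set S := {N : Matrix (Fin 2) (Fin 2) F[X] |
      ∃ h₁ ∈ Hset F n, ∃ h₂ ∈ Hset F m, N = h₁ * M * h₂} with hS
  let φ : ↥(Hset F n) × ↥(Hset F m) → ↥S × Fˣ := fun p =>
    (⟨(p.1 : Matrix (Fin 2) (Fin 2) F[X]) * M * (p.2 : Matrix (Fin 2) (Fin 2) F[X]),
        ⟨p.1, p.1.2, p.2, p.2.2, rfl⟩⟩,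
     Units.mk0 (((p.1 : Matrix (Fin 2) (Fin 2) F[X]) 0 0).coeff 0) (Hset_coeff hn0 p.1.2))
  have hinj : Function.Injective φ := by
    rintro ⟨⟨h₁, m₁⟩, ⟨h₂, m₂⟩⟩ ⟨⟨h₁', m₁'⟩, ⟨h₂', m₂'⟩⟩ hp
    have h1 : h₁ * M * h₂ = h₁' * M * h₂' := congrArg (fun x => (x.1 : Matrix (Fin 2) (Fin 2) F[X])) hp
    have h2 : (h₁ 0 0).coeff 0 = (h₁' 0 0).coeff 0 := congrArg (fun x => (x.2 : F)) hp
    obtain ⟨g₁, hg₁, hg₁l, hg₁r⟩ := Hset_inv hn0 m₁'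
    obtain ⟨g₂, hg₂, hg₂l, hg₂r⟩ := Hset_inv hm0 m₂'
    have hstab : (g₁ * h₁) * M * (h₂ * g₂) = M := by
      calc (g₁ * h₁) * M * (h₂ * g₂) = g₁ * (h₁ * M * h₂) * g₂ := by
            simp only [mul_assoc]
        _ = g₁ * (h₁' * M * h₂') * g₂ := by rw [h1]
        _ = (g₁ * h₁') * M * (h₂' * g₂) := by simp only [mul_assoc]
        _ = M := by rw [hg₁l, hg₂r, one_mul, mul_one]
    obtain ⟨c, hc₁, hc₂⟩ := key _ (Hset_mul hn0 hg₁ m₁) _ (Hset_mul hm0 m₂ hg₂) hstab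
    have e₁ : h₁ = h₁' * (C ((c:F)) • 1) := by
      calc h₁ = (h₁' * g₁) * h₁ := by rw [hg₁r, one_mul]
        _ = h₁' * (g₁ * h₁) := by rw [mul_assoc]
        _ = h₁' * (C ((c:F)) • 1) := by rw [hc₁]
    have e₂ : h₂ = (C (((c⁻¹:Fˣ):F)) • 1) * h₂' := by
      calc h₂ = h₂ * (g₂ * h₂') := by rw [hg₂l, mul_one]
        _ = (h₂ * g₂) * h₂' := by rw [mul_assoc]
        _ = (C (((c⁻¹:Fˣ):F)) • 1) * h₂' := by rw [hc₂]
    have hcoeff : (h₁ 0 0).coeff 0 = (h₁' 0 0).coeff 0 * (c : F) := by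
      rw [e₁]
      have : (h₁' * (C ((c:F)) • 1)) 0 0 = h₁' 0 0 * C ((c:F)) := by
        simp [Matrix.mul_apply, Fin.sum_univ_two, Matrix.one_apply, smul_eq_mul]
      rw [this, Polynomial.coeff_mul_C]
    have hcu : c = 1 := by
      have ha0 : (h₁' 0 0).coeff 0 ≠ 0 := Hset_coeff hn0 m₁'
      have h3 := h2
      rw [hcoeff] at h3
      field_simp at h3
      exact Units.val_eq_one.mp h3
    subst hcu
    have hh₁ : h₁ = h₁' := by rw [e₁]; simp
    have hh₂ : h₂ = h₂' := by rw [e₂]; simp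
    simp only [Prod.mk.injEq, Subtype.mk.injEq]
    exact ⟨hh₁, hh₂⟩
  have hsurj : Function.Surjective φ := by
    rintro ⟨⟨N, hN⟩, c⟩
    obtain ⟨h₁, m₁, h₂, m₂, rfl⟩ := hN
    have ha0 : ((h₁ 0 0).coeff 0) ≠ 0 := Hset_coeff hn0 m₁
    set s : Fˣ := c * (Units.mk0 _ ha0)⁻¹ with hs
    refine ⟨(⟨C ((s:F)) • h₁, Hset_smul hn0 m₁ s⟩,
             ⟨C (((s⁻¹:Fˣ):F)) • h₂, Hset_smul hm0 m₂ s⁻¹⟩), ?_⟩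
    have hprod : (C ((s:F)) • h₁) * M * (C (((s⁻¹:Fˣ):F)) • h₂) = h₁ * M * h₂ := by
      rw [Matrix.smul_mul, Matrix.smul_mul, Matrix.mul_smul, smul_smul, ← map_mul]
      norm_num
    have hcoe : ((C ((s:F)) • h₁) 0 0).coeff 0 = (s : F) * (h₁ 0 0).coeff 0 := by
      simp [Matrix.smul_apply, smul_eq_mul, Polynomial.coeff_C_mul]
    refine Prod.ext (Subtype.ext hprod) (Units.ext ?_)
    simp only [φ, Units.val_mk0, hcoe, hs]
    rw [Units.val_mul]
    simp [Units.val_inv_eq_inv_val]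
    field_simp
  have hcard : Nat.card (↥(Hset F n) × ↥(Hset F m)) = Nat.card (↥S × Fˣ) :=
    Nat.card_congr (Equiv.ofBijective φ ⟨hinj, hsurj⟩)
  rw [Nat.card_prod, Nat.card_prod] at hcard
  have hFx : Nat.card Fˣ = q - 1 := by
    rw [Nat.card_units, Nat.card_eq_fintype_card, hq]
  rw [hFx] at hcard
  have hq1 : 1 < q := by rw [← hq]; exact Fintype.one_lt_card
  rw [hcard, Nat.mul_div_cancel _ (by omega : 0 < q - 1)]
end

section
/- Let d ≥ 2 be an even integer and let K = 𝔽_{q^d} be the field with q^d elements, containing 𝔽_q. The set of points [z : 1] ∈ ℙ¹(K) where z ∈ K has degree exactly 2 over 𝔽_q (i.e., z ∉ 𝔽_q but 1, z, z² are linearly dependent over 𝔽_q) forms a single orbit under the action of GL₂(𝔽_q) on ℙ¹(K), and this orbit has exactly q² − q elements. -/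
open Polynomial in
private lemma card_fixed_aux (K : Type) [Field K] [Fintype K] [DecidableEq K] (q d m : ℕ)
    (hq2 : 2 ≤ q) (hK : Fintype.card K = q ^ d) (hm : m ∣ d) (hm1 : 1 ≤ m) (hd1 : 1 ≤ d) :
    Set.ncard {x : K | x ^ q ^ m = x} = q ^ m := by
  have ha1 : 1 < q ^ m := Nat.one_lt_pow (by omega) (by omega)
  have hb1 : 1 < q ^ d := Nat.one_lt_pow (by omega) (by omega)
  set g : K[X] := X ^ q ^ m - X with hgdef
  set h : K[X] := X ^ q ^ d - X with hhdef
  have hg0 : g ≠ 0 := FiniteField.X_pow_card_sub_X_ne_zero K ha1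
  have hh0 : h ≠ 0 := FiniteField.X_pow_card_sub_X_ne_zero K hb1
  have hdg : g.natDegree = q ^ m := FiniteField.X_pow_card_sub_X_natDegree_eq K ha1
  have hdh : h.natDegree = q ^ d := FiniteField.X_pow_card_sub_X_natDegree_eq K hb1
  have hroots_h : h.roots = Finset.univ.val := by
    have := FiniteField.roots_X_pow_card_sub_X K
    rwa [hK] at this
  have hcard_h : Multiset.card h.roots = q ^ d := by
    rw [hroots_h, ← Finset.card_def, Finset.card_univ, hK]
  have hnodup_h : h.roots.Nodup := by rw [hroots_h]; exact Finset.univ.nodup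
  -- divisibility
  obtain ⟨k, hk⟩ := hm
  have hdvd1 : q ^ m - 1 ∣ q ^ d - 1 := by
    rw [hk, pow_mul]
    simpa using Nat.sub_dvd_pow_sub_pow (q ^ m) 1 k
  obtain ⟨t, ht⟩ := hdvd1
  have hpoly1 : (X ^ (q ^ m - 1) - 1 : K[X]) ∣ X ^ (q ^ d - 1) - 1 := by
    have := sub_dvd_pow_sub_pow (X ^ (q ^ m - 1) : K[X]) 1 t
    rwa [← pow_mul, one_pow, ← ht] at this
  have e1 : g = X * (X ^ (q ^ m - 1) - 1) := by
    have hc : q ^ m - 1 + 1 = q ^ m := by omega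
    rw [mul_sub, mul_one, ← pow_succ', hc]
  have e2 : h = X * (X ^ (q ^ d - 1) - 1) := by
    have hc : q ^ d - 1 + 1 = q ^ d := by omega
    rw [mul_sub, mul_one, ← pow_succ', hc]
  have hgh : g ∣ h := by
    rw [e1, e2]; exact mul_dvd_mul_left X hpoly1
  obtain ⟨e, he⟩ := hgh
  have he0 : e ≠ 0 := fun h0 => hh0 (by rw [he, h0, mul_zero])
  have hroots_mul : h.roots = g.roots + e.roots := by
    rw [he]; exact Polynomial.roots_mul (he ▸ hh0)
  have hdeg_sum : q ^ d = q ^ m + e.natDegree := by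
    have := Polynomial.natDegree_mul hg0 he0
    rw [← he, hdh, hdg] at this; omega
  have hce : Multiset.card e.roots ≤ e.natDegree := Polynomial.card_roots' e
  have hcg : Multiset.card g.roots ≤ q ^ m := hdg ▸ Polynomial.card_roots' g
  have hsum : Multiset.card g.roots + Multiset.card e.roots = q ^ d := by
    rw [← Multiset.card_add, ← hroots_mul, hcard_h]
  have hcardg : Multiset.card g.roots = q ^ m := by omega
  have hnodup_g : g.roots.Nodup :=
    Multiset.nodup_of_le (Polynomial.roots.le_of_dvd hh0 ⟨e, he⟩) hnodup_h
  have hset : {x : K | x ^ q ^ m = x} = ↑g.roots.toFinset := by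
    ext x
    simp only [Set.mem_setOf_eq, Finset.coe_sort_coe, Finset.mem_coe, Multiset.mem_toFinset,
      Polynomial.mem_roots hg0, Polynomial.IsRoot, hgdef, Polynomial.eval_sub,
      Polynomial.eval_pow, Polynomial.eval_X, sub_eq_zero]
    rw [Polynomial.mem_roots (by rw [← hgdef]; exact hg0), Polynomial.IsRoot.def]
    simp [sub_eq_zero]
  rw [hset, Set.ncard_coe_finset, Multiset.toFinset_card_of_nodup hnodup_g, hcardg]


private lemma frob_add (F K : Type) [Field F] [Fintype F] [Field K] [Algebra F K]
    (q : ℕ) (hq : Fintype.card F = q) (x y : K) : (x + y) ^ q = x ^ q + y ^ q := by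
  haveI : CharP F (ringChar F) := ringChar.charP F
  obtain ⟨n, hp, hn⟩ := FiniteField.card F (ringChar F)
  haveI : CharP K (ringChar F) := charP_of_injective_algebraMap (algebraMap F K).injective _
  haveI : Fact (ringChar F).Prime := ⟨hp⟩
  rw [← hq, hn]
  exact add_pow_char_pow x y _ _

private lemma frob_sub (F K : Type) [Field F] [Fintype F] [Field K] [Algebra F K]
    (q : ℕ) (hq : Fintype.card F = q) (x y : K) : (x - y) ^ q = x ^ q - y ^ q := by
  haveI : CharP F (ringChar F) := ringChar.charP F
  obtain ⟨n, hp, hn⟩ := FiniteField.card F (ringChar F)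
  haveI : CharP K (ringChar F) := charP_of_injective_algebraMap (algebraMap F K).injective _
  haveI : Fact (ringChar F).Prime := ⟨hp⟩
  rw [← hq, hn]
  exact sub_pow_char_pow x y _

private lemma frob_fix (F K : Type) [Field F] [Fintype F] [Field K] [Algebra F K]
    (q : ℕ) (hq : Fintype.card F = q) (a : F) :
    (algebraMap F K a) ^ q = algebraMap F K a := by
  rw [← map_pow, ← hq, FiniteField.pow_card]


private lemma range_eq_fixed (F K : Type) [Field F] [Fintype F] [Field K] [Fintype K]
    [Algebra F K] (q d : ℕ) (hq : Fintype.card F = q) (hK : Fintype.card K = q ^ d)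
    (hd1 : 1 ≤ d) :
    Set.range (algebraMap F K) = {x : K | x ^ q = x} := by
  classical
  have hq2 : 2 ≤ q := hq ▸ Fintype.one_lt_card
  apply Set.eq_of_subset_of_ncard_le
  · rintro x ⟨a, rfl⟩
    exact frob_fix F K q hq a
  · have h1 : Set.ncard {x : K | x ^ q = x} = q := by
      have := card_fixed_aux K q d 1 hq2 hK (one_dvd d) le_rfl hd1
      simpa using this
    have h2 : (Set.range (algebraMap F K)).ncard = q := by
      rw [← Set.image_univ, Set.ncard_image_of_injective _ (algebraMap F K).injective,
        Set.ncard_univ, Nat.card_eq_fintype_card, hq]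
    omega
  · exact Set.toFinite _


private lemma deg2_pow (F K : Type) [Field F] [Fintype F] [Field K] [Algebra F K]
    (q : ℕ) (hq : Fintype.card F = q) (z : K)
    (hz : z ∉ Set.range (algebraMap F K))
    (hli : ¬ LinearIndependent F ![1, z, z ^ 2]) :
    z ^ (q * q) = z := by
  rw [Fintype.not_linearIndependent_iff] at hli
  obtain ⟨g, hsum, i, hi⟩ := hli
  rw [Fin.sum_univ_three] at hsum
  simp only [Matrix.cons_val_zero, Matrix.cons_val_one, Matrix.head_cons,
    Matrix.cons_val_two, Matrix.tail_cons, Algebra.smul_def, mul_one] at hsum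
  set φ := algebraMap F K with hφ
  have hinj : Function.Injective φ := (algebraMap F K).injective
  have hg2 : g 2 ≠ 0 := by
    intro h2
    rw [h2, map_zero, zero_mul, add_zero] at hsum
    have hg1 : g 1 = 0 := by
      by_contra h1
      apply hz
      refine ⟨-g 0 / g 1, ?_⟩
      have h1' : φ (g 1) ≠ 0 := fun hc => h1 (hinj (by rwa [map_zero]))
      rw [map_div₀, map_neg]
      field_simp
      linear_combination -hsum
    rw [hg1, map_zero, zero_mul, add_zero] at hsum
    have hg0 : g 0 = 0 := hinj (by rwa [map_zero])
    fin_cases i <;> simp_all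
  have hc2 : φ (g 2) ≠ 0 := fun hc => hg2 (hinj (by rwa [map_zero]))
  set A := φ (-g 0 / g 2) with hA
  set B := φ (-g 1 / g 2) with hB
  have hz2 : z ^ 2 = A + B * z := by
    rw [hA, hB, map_div₀, map_div₀, map_neg, map_neg]
    field_simp
    linear_combination hsum
  have hAq : A ^ q = A := frob_fix F K q hq _
  have hBq : B ^ q = B := frob_fix F K q hq _
  have hqz2 : (z ^ q) ^ 2 = A + B * z ^ q := by
    have h1 : (z ^ 2) ^ q = (A + B * z) ^ q := by rw [hz2]
    rw [frob_add F K q hq, mul_pow, hAq, hBq, ← pow_mul, mul_comm 2 q, pow_mul] at h1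
    exact h1
  have key : (z ^ q - z) * (z ^ q - (B - z)) = 0 := by
    linear_combination hqz2 - hz2
  rcases mul_eq_zero.mp key with h | h
  · rw [sub_eq_zero] at h
    rw [pow_mul, h, h]
  · rw [sub_eq_zero] at h
    rw [pow_mul, h, frob_sub F K q hq, hBq, h]
    ring

private lemma pow_deg2 (F K : Type) [Field F] [Fintype F] [Field K] [Fintype K] [Algebra F K]
    (q : ℕ) (hq : Fintype.card F = q)
    (hfix : Set.range (algebraMap F K) = {x : K | x ^ q = x}) (z : K)
    (hzz : z ^ (q * q) = z) :
    ¬ LinearIndependent F ![1, z, z ^ 2] := by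
  set φ := algebraMap F K with hφ
  have hs : (z + z ^ q) ∈ Set.range φ := by
    rw [hfix]
    show (z + z ^ q) ^ q = z + z ^ q
    rw [frob_add F K q hq, ← pow_mul, hzz, add_comm]
  have ht : (z * z ^ q) ∈ Set.range φ := by
    rw [hfix]
    show (z * z ^ q) ^ q = z * z ^ q
    rw [mul_pow, ← pow_mul, hzz, mul_comm]
  obtain ⟨σ, hσ⟩ := hs
  obtain ⟨τ, hτ⟩ := ht
  rw [Fintype.not_linearIndependent_iff]
  refine ⟨![τ, -σ, 1], ?_, ⟨2, by simp⟩⟩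
  rw [Fin.sum_univ_three]
  simp only [Matrix.cons_val_zero, Matrix.cons_val_one, Matrix.head_cons,
    Matrix.cons_val_two, Matrix.tail_cons, Algebra.smul_def, mul_one, map_neg, map_one]
  linear_combination hτ - z * hσ




/-- Let `d ≥ 2` be even and `K = 𝔽_{q^d}` containing `𝔽_q`. The set `S` of points
`[z : 1] ∈ ℙ¹(K)` with `z` of degree exactly `2` over `𝔽_q` (i.e. `z ∉ 𝔽_q` but
`1, z, z²` linearly dependent over `𝔽_q`) is stable under `GL₂(𝔽_q)`, the action of
`GL₂(𝔽_q)` is transitive on it (so `S` is a single orbit), and `S` has exactly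
`q² − q` elements. -/
theorem orbit_of_degree_two_points
    (F K : Type) [Field F] [Fintype F] [Field K] [Fintype K] [Algebra F K]
    (q d : ℕ) (hq : Fintype.card F = q) (hK : Fintype.card K = q ^ d)
    (hd2 : 2 ≤ d) (hdeven : Even d)
    (S : Set (Projectivization K (Fin 2 → K)))
    (hS : S = {P | ∃ z : K, z ∉ Set.range (algebraMap F K) ∧
      ¬ LinearIndependent F ![1, z, z ^ 2] ∧
      ∃ h : (![z, (1 : K)] ≠ 0), P = Projectivization.mk K ![z, (1 : K)] h}) :
    (∀ z : K, z ∉ Set.range (algebraMap F K) →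
      ¬ LinearIndependent F ![1, z, z ^ 2] →
      ∀ M : Matrix (Fin 2) (Fin 2) F, IsUnit M.det →
        ∀ h : (M.map (algebraMap F K)).mulVec ![z, 1] ≠ 0,
          Projectivization.mk K ((M.map (algebraMap F K)).mulVec ![z, 1]) h ∈ S) ∧
    (∀ z w : K, z ∉ Set.range (algebraMap F K) →
      ¬ LinearIndependent F ![1, z, z ^ 2] →
      w ∉ Set.range (algebraMap F K) →
      ¬ LinearIndependent F ![1, w, w ^ 2] →
      ∀ hw : (![w, (1 : K)] ≠ 0),
        ∃ M : Matrix (Fin 2) (Fin 2) F, IsUnit M.det ∧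
          ∃ h : (M.map (algebraMap F K)).mulVec ![z, 1] ≠ 0,
            Projectivization.mk K ![w, (1 : K)] hw =
              Projectivization.mk K ((M.map (algebraMap F K)).mulVec ![z, 1]) h) ∧
    Nat.card S = q ^ 2 - q := by
  classical
  have hinj : Function.Injective (algebraMap F K) := (algebraMap F K).injective
  have hq2 : 2 ≤ q := hq ▸ Fintype.one_lt_card
  have hd1 : 1 ≤ d := by omega
  have hfix := range_eq_fixed F K q d hq hK hd1
  have hE2card : Set.ncard {x : K | x ^ (q * q) = x} = q * q := by
    have := card_fixed_aux K q d 2 hq2 hK hdeven.two_dvd (by norm_num) hd1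
    rw [pow_two] at this
    exact this
  have hE1sub : Set.range (algebraMap F K) ⊆ {x : K | x ^ (q * q) = x} := by
    rw [hfix]
    intro x hx
    show x ^ (q * q) = x
    rw [pow_mul, hx, hx]
  have hnz : ∀ z : K, ![z, (1 : K)] ≠ 0 := fun z h0 =>
    one_ne_zero (α := K) (by simpa using congrFun h0 1)
  -- component computation for mulVec
  have hmv : ∀ (M : Matrix (Fin 2) (Fin 2) F) (z : K) (i : Fin 2),
      ((M.map (algebraMap F K)).mulVec ![z, 1]) i
        = algebraMap F K (M i 0) * z + algebraMap F K (M i 1) := by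
    intro M z i
    simp [Matrix.mulVec, dotProduct, Fin.sum_univ_two, Matrix.map_apply, Matrix.vecHead, Matrix.vecTail]
  refine ⟨?_, ?_, ?_⟩
  · -- stability
    intro z hz hli M hM h
    have hzz := deg2_pow F K q hq z hz hli
    set A := algebraMap F K (M 0 0) with hA
    set B := algebraMap F K (M 0 1) with hB
    set C := algebraMap F K (M 1 0) with hC
    set D := algebraMap F K (M 1 1) with hD
    have ht : C * z + D ≠ 0 := by
      intro h0
      rcases eq_or_ne (M 1 0) 0 with h10 | h10
      · have hC0 : C = 0 := by rw [hC, h10, map_zero]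
        have hD0 : D = 0 := by rwa [hC0, zero_mul, zero_add] at h0
        have h11 : M 1 1 = 0 := hinj (by rw [← hD, hD0, map_zero])
        rw [Matrix.det_fin_two, h10, h11] at hM
        simp at hM
      · apply hz
        refine ⟨-M 1 1 / M 1 0, ?_⟩
        have hC0 : C ≠ 0 := fun hc => h10 (hinj (by rw [← hC, hc, map_zero]))
        rw [map_div₀, map_neg, ← hC, ← hD]
        field_simp
        linear_combination -h0
    set w := (A * z + B) / (C * z + D) with hwdef
    have hwmul : w * (C * z + D) = A * z + B := div_mul_cancel₀ _ ht
    have hwr : w ∉ Set.range (algebraMap F K) := by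
      rintro ⟨e, he⟩
      have heq : algebraMap F K e * (C * z + D) = A * z + B := by rw [he, hwmul]
      rcases eq_or_ne (M 0 0 - e * M 1 0) 0 with hE | hE
      · have h00 : M 0 0 = e * M 1 0 := sub_eq_zero.mp hE
        have h01 : M 0 1 = e * M 1 1 := by
          apply hinj
          have : A = algebraMap F K e * C := by rw [hA, hC, h00, map_mul]
          rw [map_mul, ← hB, ← hD]
          linear_combination -heq - z * this
        have : M.det = 0 := by rw [Matrix.det_fin_two, h00, h01]; ring
        rw [this] at hM
        simp at hM
      · apply hz
        refine ⟨(e * M 1 1 - M 0 1) / (M 0 0 - e * M 1 0), ?_⟩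
        have hne : algebraMap F K (M 0 0 - e * M 1 0) ≠ 0 :=
          fun hc => hE (hinj (by rw [hc, map_zero]))
        rw [map_div₀]
        rw [div_eq_iff hne]
        push_cast [map_sub, map_mul]
        rw [← hA, ← hB, ← hC, ← hD]
        linear_combination heq
    have hAq : A ^ q = A := frob_fix F K q hq _
    have hBq : B ^ q = B := frob_fix F K q hq _
    have hCq : C ^ q = C := frob_fix F K q hq _
    have hDq : D ^ q = D := frob_fix F K q hq _
    have hlin : ∀ X Y : K, X ^ q = X → Y ^ q = Y → (X * z + Y) ^ (q * q) = X * z + Y := by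
      intro X Y hX hY
      have e1 : (X * z + Y) ^ q = X * z ^ q + Y := by
        rw [frob_add F K q hq, mul_pow, hX, hY]
      rw [pow_mul, e1, frob_add F K q hq, mul_pow, ← pow_mul, hzz, hX, hY]
    have hww : w ^ (q * q) = w := by
      rw [hwdef, div_pow, hlin A B hAq hBq, hlin C D hCq hDq]
    have hliw := pow_deg2 F K q hq hfix w hww
    rw [hS]
    refine ⟨w, hwr, hliw, hnz w, ?_⟩
    rw [Projectivization.mk_eq_mk_iff]
    refine ⟨Units.mk0 (C * z + D) ht, ?_⟩
    have hveq : (M.map (algebraMap F K)).mulVec ![z, 1] = ![A * z + B, C * z + D] := by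
      funext i
      rw [hmv M z i]
      fin_cases i <;> simp [hA, hB, hC, hD]
    rw [hveq]
    funext i
    fin_cases i
    · show (Units.mk0 (C * z + D) ht : Kˣ) • (![w, (1:K)] 0) = ![A * z + B, C * z + D] 0
      simp only [Matrix.cons_val_zero, Units.smul_def, Units.val_mk0, smul_eq_mul]
      rw [mul_comm, hwmul]
    · show (Units.mk0 (C * z + D) ht : Kˣ) • (![w, (1:K)] 1) = ![A * z + B, C * z + D] 1
      simp only [Matrix.cons_val_one, Matrix.head_cons, Units.smul_def, Units.val_mk0,
        smul_eq_mul, mul_one, Matrix.cons_val_zero]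
  · -- transitivity
    intro z w hz hliz hwr hliw hnw
    have hzz := deg2_pow F K q hq z hz hliz
    have hww := deg2_pow F K q hq w hwr hliw
    set ψ : F × F → K := fun p => algebraMap F K p.1 + algebraMap F K p.2 * z with hψ
    have hsub : Set.range ψ ⊆ {x : K | x ^ (q * q) = x} := by
      rintro x ⟨⟨a, b⟩, rfl⟩
      show (ψ (a, b)) ^ (q * q) = ψ (a, b)
      have ha : (algebraMap F K a) ^ q = _ := frob_fix F K q hq a
      have hb : (algebraMap F K b) ^ q = _ := frob_fix F K q hq b
      show (algebraMap F K a + algebraMap F K b * z) ^ (q * q) = _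
      rw [pow_mul, frob_add F K q hq, mul_pow, ha, hb, frob_add F K q hq, mul_pow,
        frob_fix F K q hq, frob_fix F K q hq, ← pow_mul, hzz]
    have hinjψ : Function.Injective ψ := by
      rintro ⟨a, b⟩ ⟨a', b'⟩ habs
      simp only [hψ] at habs
      have hbb : b = b' := by
        by_contra hbb
        apply hz
        refine ⟨(a' - a) / (b - b'), ?_⟩
        have hne : algebraMap F K (b - b') ≠ 0 :=
          fun hc => hbb (sub_eq_zero.mp (hinj (hc.trans (map_zero (algebraMap F K)).symm)))
        rw [map_div₀, div_eq_iff hne]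
        push_cast [map_sub]
        linear_combination -habs
      have haa : a = a' := by
        apply hinj
        rw [hbb] at habs
        linear_combination habs
      simp [haa, hbb]
    have hrcard : (Set.range ψ).ncard = q * q := by
      rw [← Set.image_univ, Set.ncard_image_of_injective _ hinjψ, Set.ncard_univ,
        Nat.card_eq_fintype_card, Fintype.card_prod, hq]
    have him : Set.range ψ = {x : K | x ^ (q * q) = x} :=
      Set.eq_of_subset_of_ncard_le hsub (by omega) (Set.toFinite _)
    have hwmem : w ∈ Set.range ψ := by rw [him]; exact hww
    obtain ⟨⟨a, b⟩, hab⟩ := hwmem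
    have hab' : algebraMap F K a + algebraMap F K b * z = w := hab
    have hb0 : b ≠ 0 := by
      intro hb0
      apply hwr
      exact ⟨a, by rw [← hab', hb0, map_zero, zero_mul, add_zero]⟩
    refine ⟨Matrix.of ![![b, a], ![0, 1]], ?_, ?_, ?_⟩
    · rw [Matrix.det_fin_two]
      simp only [Matrix.of_apply, Matrix.cons_val', Matrix.cons_val_zero, Matrix.cons_val_one,
        Matrix.head_cons, Matrix.empty_val', Matrix.cons_val_fin_one, Matrix.head_fin_const]
      simpa using isUnit_iff_ne_zero.mpr hb0
    · intro h0
      have h1 := congrFun h0 1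
      rw [hmv] at h1
      simp at h1
    · rw [Projectivization.mk_eq_mk_iff]
      refine ⟨1, ?_⟩
      rw [one_smul]
      funext i
      rw [hmv _ z i]
      fin_cases i
      · show algebraMap F K (Matrix.of ![![b, a], ![0, 1]] 0 0) * z
            + algebraMap F K (Matrix.of ![![b, a], ![0, 1]] 0 1) = ![w, (1:K)] 0
        simp only [Matrix.of_apply, Matrix.cons_val_zero, Matrix.cons_val_one, Matrix.head_cons]
        rw [← hab']; ring
      · show algebraMap F K (Matrix.of ![![b, a], ![0, 1]] 1 0) * z
            + algebraMap F K (Matrix.of ![![b, a], ![0, 1]] 1 1) = ![w, (1:K)] 1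
        simp
  · -- cardinality
    set ι : K → Projectivization K (Fin 2 → K) :=
      fun z => Projectivization.mk K ![z, (1 : K)] (hnz z) with hι
    have hinjι : Function.Injective ι := by
      intro z w hzw
      rw [hι, Projectivization.mk_eq_mk_iff] at hzw
      obtain ⟨u, hu⟩ := hzw
      have h1 := congrFun hu 1
      simp only [Pi.smul_apply, Matrix.cons_val_one, Matrix.head_cons, smul_eq_mul, mul_one,
        Units.smul_def, Matrix.cons_val_zero] at h1
      have h0 := congrFun hu 0
      simp only [Pi.smul_apply, Matrix.cons_val_zero, Units.smul_def, smul_eq_mul] at h0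
      rw [h1, one_mul] at h0
      exact h0.symm
    have hSim : S = ι '' ({x : K | x ^ (q * q) = x} \ Set.range (algebraMap F K)) := by
      rw [hS]
      ext P
      constructor
      · rintro ⟨z, hz1, hz2, h3, rfl⟩
        exact ⟨z, ⟨deg2_pow F K q hq z hz1 hz2, hz1⟩, rfl⟩
      · rintro ⟨z, ⟨hz1, hz2⟩, rfl⟩
        exact ⟨z, hz2, pow_deg2 F K q hq hfix z hz1, hnz z, rfl⟩
    rw [hSim, Nat.card_coe_set_eq, Set.ncard_image_of_injective _ hinjι,
      Set.ncard_diff (hE1sub) (Set.toFinite _), hE2card]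
    have : (Set.range (algebraMap F K)).ncard = q := by
      rw [← Set.image_univ, Set.ncard_image_of_injective _ hinj, Set.ncard_univ,
        Nat.card_eq_fintype_card, hq]
    rw [this, pow_two]
end
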